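/- arXiv:1504.06363 — 3 statements merged into one kernel-verified Lean document; each statement's English description precedes it below -/
import Mathlib

section
/- There is a constant C > 0 such that for all n, all bounds 0 < L ≤ U with R = U/L, every initial solution x ∈ {0,1}^n, and every adversary strategy (changing at most one processing time per iteration), the expected number of iterations of RLS until the current solution x satisfies d(x) ≤ U is at most C · n · (1 + min{log n, log R}). -/
/-!
While the discrepancy `d` exceeds `U`, let `k` be the number of jobs on the fuller machine. Moving
one of them is accepted (its time is at most `U < d`) and, if the discrepancy stays above `U`, the
same machine remains fuller, so `k` drops by one; moving any other job is rejected. The adversary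
changes one time by at most `U - L < d`, which cannot swap the fuller machine, so it leaves `k`
unchanged. Hence `E[k]` shrinks by the factor `1 - 1/n` per iteration while no good solution has
been seen. A bad solution has `k ≥ (U + nL)/(U + L)`, so by Markov's inequality the probability of
still being bad after `t` iterations is at most `a (1 - 1/n)^t` with
`a = n (U + L)/(U + nL) ≤ min(n, 2U/L)`; summing over `t` gives at most `n log a + 1 + n`.
-/

open scoped BigOperators ENNReal

namespace MakespanDyn

/-- Load of machine `b` (machine `M₁` corresponds to `b = false`, `M₂` to `b = true`). -/
def load {n : ℕ} (p : Fin n → ℝ) (x : Fin n → Bool) (b : Bool) : ℝ :=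
  ∑ i, if x i = b then p i else 0

/-- The makespan of the solution `x` under processing times `p`. -/
def mspan {n : ℕ} (p : Fin n → ℝ) (x : Fin n → Bool) : ℝ :=
  max (load p x false) (load p x true)

/-- The discrepancy of the solution `x` under processing times `p`. -/
def disc {n : ℕ} (p : Fin n → ℝ) (x : Fin n → Bool) : ℝ :=
  |load p x false - load p x true|

/-- Flip bit `i` of `x`. -/
def flip {n : ℕ} (x : Fin n → Bool) (i : Fin n) : Fin n → Bool :=
  Function.update x i (!(x i))

/-- One iteration of RLS with processing times `p`: flip one uniformly random bit
and accept iff the makespan does not increase. -/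
noncomputable def rlsStep {n : ℕ} (hn : 0 < n) (p : Fin n → ℝ) (x : Fin n → Bool) :
    PMF (Fin n → Bool) :=
  haveI : Nonempty (Fin n) := Fin.pos_iff_nonempty.mp hn
  (PMF.uniformOfFintype (Fin n)).map fun i =>
    if mspan p (flip x i) ≤ mspan p x then flip x i else x

/-- The distribution of the mutation mask of the (1+1) EA: every bit is set
independently with probability `1/n`. -/
noncomputable def maskPMF (n : ℕ) (hn : 0 < n) : PMF (Fin n → Bool) :=
  ⟨fun m => ∏ i, (if m i then (n : ℝ≥0∞)⁻¹ else 1 - (n : ℝ≥0∞)⁻¹), by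
    classical
    have hinv : (n : ℝ≥0∞)⁻¹ ≤ 1 := ENNReal.inv_le_one.mpr (by exact_mod_cast hn)
    have hsum :
        ∑ m : Fin n → Bool, ∏ i, (if m i then (n : ℝ≥0∞)⁻¹ else 1 - (n : ℝ≥0∞)⁻¹) = 1 := by
      rw [← Fintype.piFinset_univ, ← Finset.prod_univ_sum
        (fun _ : Fin n => (Finset.univ : Finset Bool))
        (fun _ b => if b then (n : ℝ≥0∞)⁻¹ else 1 - (n : ℝ≥0∞)⁻¹)]
      have key : (n : ℝ≥0∞)⁻¹ + (1 - (n : ℝ≥0∞)⁻¹) = 1 := add_tsub_cancel_of_le hinv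
      simp [key]
    have := hasSum_fintype
      (fun m : Fin n → Bool => ∏ i, (if m i then (n : ℝ≥0∞)⁻¹ else 1 - (n : ℝ≥0∞)⁻¹))
    rwa [hsum] at this⟩

/-- One iteration of the (1+1) EA with processing times `p`: flip every bit
independently with probability `1/n` and accept iff the makespan does not increase. -/
noncomputable def eaStep {n : ℕ} (hn : 0 < n) (p : Fin n → ℝ) (x : Fin n → Bool) :
    PMF (Fin n → Bool) :=
  (maskPMF n hn).map fun m =>
    let y : Fin n → Bool := fun i => xor (m i) (x i)
    if mspan p y ≤ mspan p x then y else x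

/-- A configuration: a solution together with the current processing times. -/
abbrev Cfg (n : ℕ) := (Fin n → Bool) × (Fin n → ℝ)

/-- The run of an algorithm given by `step` with an adversary `adv`, which may
change the processing times (as an arbitrary function of the history) before each
iteration.  `run step adv init t` is the distribution of the history (most recent
configuration first) after `t` iterations. -/
noncomputable def run {n : ℕ} (step : (Fin n → ℝ) → (Fin n → Bool) → PMF (Fin n → Bool))
    (adv : List (Cfg n) → (Fin n → ℝ)) (init : Cfg n) : ℕ → PMF (List (Cfg n))
  | 0 => PMF.pure [init]
  | t + 1 =>
      (run step adv init t).bind fun h =>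
        (step (adv h) h.headI.1).map fun x' => (x', adv h) :: h

/-- The expected number of iterations until a configuration satisfying `good` occurs,
computed as `∑_{t ≥ 0} Pr(T > t)` where `T > t` iff no configuration in the history
after `t` iterations is good. -/
noncomputable def expectedHittingTime {σ : Type*} (runs : ℕ → PMF (List σ))
    (good : σ → Prop) : ℝ≥0∞ :=
  ∑' t, (runs t).toOuterMeasure {h | ∀ c ∈ h, ¬ good c}



end MakespanDyn

theorem Fintype.sum_sub_sum_of_eq_off {ι M : Type*} [Fintype ι] [DecidableEq ι] [AddCommGroup M]
    {f g : ι → M} {i : ι} (h : ∀ j, j ≠ i → f j = g j) :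
    ∑ j, f j - ∑ j, g j = f i - g i := by
  rw [← Finset.sum_sub_distrib]
  exact Finset.sum_eq_single i (fun j _ hj => by rw [h j hj, sub_self]) (by simp)

namespace PMF

variable {α β : Type*}

theorem tsum_pure_mul (a : α) (g : α → ℝ≥0∞) : ∑' b, pure a b * g b = g a := by
  classical
  simp [pure_apply, ite_mul]

theorem tsum_bind_mul (μ : PMF α) (f : α → PMF β) (g : β → ℝ≥0∞) :
    ∑' b, μ.bind f b * g b = ∑' a, μ a * ∑' b, f a b * g b := by
  simp only [bind_apply, ← ENNReal.tsum_mul_right, ← ENNReal.tsum_mul_left, mul_assoc]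
  exact ENNReal.tsum_comm

theorem tsum_map_mul (μ : PMF α) (f : α → β) (g : β → ℝ≥0∞) :
    ∑' b, μ.map f b * g b = ∑' a, μ a * g (f a) := by
  simp only [← bind_pure_comp, tsum_bind_mul, Function.comp_apply, tsum_pure_mul]

theorem toOuterMeasure_mul_le_tsum_mul {μ : PMF α} {s : Set α} {m : ℝ≥0∞} {g : α → ℝ≥0∞}
    (h : ∀ a ∈ s, a ∈ μ.support → m ≤ g a) : μ.toOuterMeasure s * m ≤ ∑' a, μ a * g a := by
  rw [toOuterMeasure_apply, ← ENNReal.tsum_mul_right]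
  refine ENNReal.tsum_le_tsum fun a => ?_
  by_cases ha : a ∈ s
  · rw [Set.indicator_of_mem ha]
    by_cases h0 : μ a = 0
    · simp [h0]
    · exact mul_le_mul_right (h a ha h0) _
  · simp [ha]

theorem support_subset_of_bind {μ : ℕ → PMF α} {K : α → PMF α}
    (hμ : ∀ t, μ (t + 1) = (μ t).bind K) {S : Set α} (h0 : (μ 0).support ⊆ S)
    (hK : ∀ a ∈ S, (K a).support ⊆ S) (t : ℕ) : (μ t).support ⊆ S := by
  induction t with
  | zero => exact h0
  | succ t ih =>
    rw [hμ, support_bind]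
    exact Set.iUnion₂_subset fun a ha => hK a (ih ha)

theorem tsum_mul_le_pow_mul_of_bind {μ : ℕ → PMF α} {K : α → PMF α}
    (hμ : ∀ t, μ (t + 1) = (μ t).bind K) {V : α → ℝ≥0∞} {r : ℝ≥0∞}
    (hV : ∀ t, ∀ a ∈ (μ t).support, ∑' b, K a b * V b ≤ r * V a) (t : ℕ) :
    ∑' a, μ t a * V a ≤ r ^ t * ∑' a, μ 0 a * V a := by
  induction t with
  | zero => simp
  | succ t ih =>
    calc ∑' a, μ (t + 1) a * V a = ∑' a, μ t a * ∑' b, K a b * V b := by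
          rw [hμ, tsum_bind_mul]
      _ ≤ ∑' a, r * (μ t a * V a) := ENNReal.tsum_le_tsum fun a => by
          by_cases ha : μ t a = 0
          · simp [ha]
          · rw [mul_left_comm]
            exact mul_le_mul_right (hV t a ha) _
      _ ≤ r ^ (t + 1) * ∑' a, μ 0 a * V a := by
          rw [ENNReal.tsum_mul_left, pow_succ', mul_assoc]
          exact mul_le_mul_right ih _

theorem toOuterMeasure_apply_le_one (μ : PMF α) (s : Set α) : μ.toOuterMeasure s ≤ 1 :=
  (MeasureTheory.measure_mono (Set.subset_univ s)).trans_eq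
    ((toOuterMeasure_apply_eq_one_iff μ _).mpr (Set.subset_univ _))

end PMF

theorem ENNReal.tsum_le_of_le_one_of_le_mul_pow {q : ℕ → ℝ≥0∞} {A r : ℝ≥0∞}
    (h₁ : ∀ t, q t ≤ 1) (hr : ∀ t, q t ≤ A * r ^ t) (t₀ : ℕ) :
    ∑' t, q t ≤ t₀ + A * r ^ t₀ * (1 - r)⁻¹ := by
  rw [← ENNReal.summable.sum_add_tsum_nat_add' (k := t₀)]
  gcongr
  · calc ∑ t ∈ Finset.range t₀, q t ≤ ∑ _t ∈ Finset.range t₀, 1 :=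
          Finset.sum_le_sum fun t _ => h₁ t
      _ = t₀ := by simp
  · calc ∑' t, q (t + t₀) ≤ ∑' t, A * r ^ t₀ * r ^ t :=
          ENNReal.tsum_le_tsum fun t => (hr _).trans_eq (by ring)
      _ = A * r ^ t₀ * (1 - r)⁻¹ := by rw [ENNReal.tsum_mul_left, ENNReal.tsum_geometric]

theorem ENNReal.inv_mul_le_one_sub_inv_mul {n s k : ℕ} (hn : n ≠ 0) (h : s + k ≤ n * k) :
    (n : ℝ≥0∞)⁻¹ * s ≤ (1 - (n : ℝ≥0∞)⁻¹) * k := by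
  have hn' : (n : ℝ≥0∞) ≠ 0 := by exact_mod_cast hn
  have hsk : (n : ℝ≥0∞)⁻¹ * s + (n : ℝ≥0∞)⁻¹ * k ≤ k :=
    calc (n : ℝ≥0∞)⁻¹ * s + (n : ℝ≥0∞)⁻¹ * k = (n : ℝ≥0∞)⁻¹ * ((s + k : ℕ) : ℝ≥0∞) := by
          push_cast; ring
      _ ≤ (n : ℝ≥0∞)⁻¹ * (n * k) := by gcongr; exact_mod_cast h
      _ = k := ENNReal.inv_mul_cancel_left hn' (ENNReal.natCast_ne_top n)
  rw [ENNReal.sub_mul fun _ _ => ENNReal.natCast_ne_top k, one_mul]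
  exact ENNReal.le_sub_of_add_le_right (ENNReal.mul_ne_top (by simpa using hn) (by simp)) hsk

theorem mul_one_sub_inv_pow_natCeil_le_one {n : ℕ} {a : ℝ} (ha : 0 < a) (hn : 0 < n) :
    a * (1 - (n : ℝ)⁻¹) ^ ⌈n * Real.log a⌉₊ ≤ 1 := by
  set t := ⌈n * Real.log a⌉₊
  have hn' : (0 : ℝ) < n := by exact_mod_cast hn
  have hpow : (1 - (n : ℝ)⁻¹) ^ t ≤ a⁻¹ :=
    calc (1 - (n : ℝ)⁻¹) ^ t ≤ Real.exp (-(n : ℝ)⁻¹) ^ t :=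
          pow_le_pow_left₀ (sub_nonneg.mpr (inv_le_one_of_one_le₀ (by exact_mod_cast hn)))
            (Real.one_sub_le_exp_neg _) t
      _ = Real.exp (-(t / n)) := by rw [← Real.exp_nat_mul]; ring_nf
      _ ≤ Real.exp (-Real.log a) := by
          gcongr
          rw [le_div_iff₀ hn', mul_comm]
          exact Nat.le_ceil _
      _ = a⁻¹ := by rw [Real.exp_neg, Real.exp_log ha]
  calc a * (1 - (n : ℝ)⁻¹) ^ t ≤ a * a⁻¹ := by gcongr
    _ = 1 := mul_inv_cancel₀ ha.ne'

theorem natCeil_mul_log_add_le {n : ℕ} {a R : ℝ} (hn : 0 < n) (hR : 1 ≤ R) (ha : 1 ≤ a)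
    (han : a ≤ n) (haR : a ≤ 2 * R) :
    (⌈n * Real.log a⌉₊ : ℝ) + n ≤ 3 * n * (1 + min (Real.log n) (Real.log R)) := by
  have hn' : (1 : ℝ) ≤ n := by exact_mod_cast hn
  have hlog_a : Real.log a ≤ Real.log 2 + min (Real.log n) (Real.log R) := by
    rw [← min_add_add_left]
    refine le_min ?_ ?_
    · linarith [Real.log_le_log (by linarith) han, Real.log_pos one_lt_two]
    · rw [← Real.log_mul two_ne_zero (by positivity)]
      exact Real.log_le_log (by linarith) haR
  have hm : 0 ≤ min (Real.log n) (Real.log R) :=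
    le_min (Real.log_nonneg hn') (Real.log_nonneg hR)
  have hceil : (⌈n * Real.log a⌉₊ : ℝ) < n * Real.log a + 1 :=
    Nat.ceil_lt_add_one (by have := Real.log_nonneg ha; positivity)
  have hlog2 : Real.log 2 ≤ 1 := by linarith [Real.log_le_sub_one_of_pos two_pos]
  nlinarith [mul_le_mul_of_nonneg_left hlog_a (by linarith : (0 : ℝ) ≤ n)]

namespace MakespanDyn

open Finset

variable {n : ℕ}

noncomputable def runStep (step : (Fin n → ℝ) → (Fin n → Bool) → PMF (Fin n → Bool))
    (adv : List (Cfg n) → Fin n → ℝ) (h : List (Cfg n)) : PMF (List (Cfg n)) :=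
  (step (adv h) h.headI.1).map fun x' => (x', adv h) :: h

lemma run_succ (step : (Fin n → ℝ) → (Fin n → Bool) → PMF (Fin n → Bool))
    (adv : List (Cfg n) → Fin n → ℝ) (init : Cfg n) (t : ℕ) :
    run step adv init (t + 1) = (run step adv init t).bind (runStep step adv) := rfl

lemma support_run_subset {L U : ℝ} (step : (Fin n → ℝ) → (Fin n → Bool) → PMF (Fin n → Bool))
    {adv : List (Cfg n) → Fin n → ℝ} (hadv : ∀ h i, adv h i ∈ Set.Icc L U) {init : Cfg n}
    (hinit : ∀ i, init.2 i ∈ Set.Icc L U) (t : ℕ) :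
    (run step adv init t).support ⊆ {h | ∃ c hist, h = c :: hist ∧ ∀ i, c.2 i ∈ Set.Icc L U} := by
  refine PMF.support_subset_of_bind (run_succ step adv init) ?_ ?_ t
  · intro h hh
    rw [run, PMF.support_pure] at hh
    exact ⟨init, [], hh, hinit⟩
  · rintro h - _ hh
    obtain ⟨x', -, rfl⟩ := (PMF.mem_support_map_iff _ _ _).mp hh
    exact ⟨_, h, rfl, hadv h⟩

section Loads

variable (p : Fin n → ℝ) (x : Fin n → Bool)

lemma load_false_add_load_true : load p x false + load p x true = ∑ i, p i := by
  rw [load, load, ← sum_add_distrib]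
  exact sum_congr rfl fun i _ => by cases x i <;> simp

lemma load_flip (i : Fin n) (b : Bool) :
    load p (flip x i) b =
      load p x b + ((if (!x i) = b then p i else 0) - if x i = b then p i else 0) := by
  have h := Fintype.sum_sub_sum_of_eq_off (i := i)
    (f := fun j => if flip x i j = b then p j else 0) (g := fun j => if x j = b then p j else 0)
    (fun j hj => by simp [flip, Function.update_of_ne hj])
  rw [show flip x i i = !x i from Function.update_self ..] at h
  rw [load, load]
  linarith

lemma load_flip_self (i : Fin n) : load p (flip x i) (x i) = load p x (x i) - p i := by
  simp [load_flip, sub_eq_add_neg]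

lemma load_flip_not (i : Fin n) : load p (flip x i) (!x i) = load p x (!x i) + p i := by
  simp [load_flip]

noncomputable def heavy : Bool := decide (load p x false < load p x true)

noncomputable def heavyCount : ℕ := (univ.filter fun i => x i = heavy p x).card

lemma heavy_eq_of_lt {p : Fin n → ℝ} {x : Fin n → Bool} {b : Bool}
    (h : load p x (!b) < load p x b) : heavy p x = b := by
  cases b <;> simp_all [heavy, le_of_lt]

lemma disc_eq_load_heavy_sub :
    disc p x = load p x (heavy p x) - load p x (!heavy p x) := by
  by_cases h : load p x false < load p x true
  · simp [heavy, h, disc, abs_sub_comm (load p x false), abs_of_pos (sub_pos.mpr h)]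
  · simp [heavy, h, disc, abs_of_nonneg (sub_nonneg.mpr (not_lt.mp h))]

lemma mspan_eq_load_heavy : mspan p x = load p x (heavy p x) := by
  by_cases h : load p x false < load p x true
  · simp [heavy, h, mspan, le_of_lt]
  · simp [heavy, h, mspan, not_lt.mp h]

lemma mspan_eq_max_load (b : Bool) : mspan p x = max (load p x b) (load p x !b) := by
  cases b <;> simp [mspan, max_comm]

lemma disc_eq_abs_load_sub (b : Bool) : disc p x = |load p x b - load p x !b| := by
  cases b <;> simp [disc, abs_sub_comm]

lemma disc_eq_two_mul_mspan_sub : disc p x = 2 * mspan p x - ∑ i, p i := by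
  rw [← load_false_add_load_true p x, disc, mspan]
  rcases le_total (load p x false) (load p x true) with h | h
  · rw [abs_of_nonpos (by linarith), max_eq_right h]; ring
  · rw [abs_of_nonneg (by linarith), max_eq_left h]; ring

lemma disc_le_of_mspan_le {y : Fin n → Bool} (h : mspan p y ≤ mspan p x) :
    disc p y ≤ disc p x := by
  rw [disc_eq_two_mul_mspan_sub, disc_eq_two_mul_mspan_sub p x]
  linarith

end Loads

section BadState

variable {p : Fin n → ℝ} {x : Fin n → Bool}

lemma add_mul_le_mul_heavyCount {L U : ℝ} (hp : ∀ i, p i ∈ Set.Icc L U)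
    (hbad : U < disc p x) : U + n * L ≤ (U + L) * heavyCount p x := by
  set b := heavy p x
  have h_heavy : load p x b ≤ heavyCount p x * U :=
    calc load p x b ≤ ∑ i, if x i = b then U else 0 :=
          sum_le_sum fun i _ => by split_ifs <;> simp [(hp i).2]
      _ = heavyCount p x * U := by rw [← sum_filter, sum_const, nsmul_eq_mul]; rfl
  have h_light : n * L ≤ load p x (!b) + heavyCount p x * L :=
    calc (n : ℝ) * L = ∑ _i : Fin n, L := by simp
      _ ≤ ∑ i, ((if x i = !b then p i else 0) + if x i = b then L else 0) :=
          sum_le_sum fun i _ => by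
            by_cases hi : x i = b
            · simp [hi]
            · simp [Bool.eq_not_iff.mpr hi, (hp i).1]
      _ = load p x (!b) + heavyCount p x * L := by
          rw [sum_add_distrib, ← sum_filter (p := fun i => x i = b) (f := fun _ => L), sum_const,
            nsmul_eq_mul]
          rfl
  have := disc_eq_load_heavy_sub p x
  linarith

lemma mspan_flip_le_of_heavy {i : Fin n} (hi : x i = heavy p x) (h0 : 0 ≤ p i)
    (hd : p i ≤ disc p x) : mspan p (flip x i) ≤ mspan p x := by
  have := disc_eq_load_heavy_sub p x
  rw [mspan_eq_max_load p (flip x i) (x i), load_flip_self, load_flip_not, mspan_eq_load_heavy,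
    ← hi]
  rw [← hi] at this
  exact max_le (by linarith) (by linarith)

lemma mspan_lt_mspan_flip_of_not_heavy {i : Fin n} (hi : x i ≠ heavy p x) (hpos : 0 < p i) :
    mspan p x < mspan p (flip x i) := by
  have hi' : (!x i) = heavy p x := by simpa [Bool.not_eq_not] using Bool.eq_not_iff.mpr hi
  calc mspan p x = load p x (!x i) := by rw [mspan_eq_load_heavy, hi']
    _ < load p (flip x i) (!x i) := by rw [load_flip_not]; linarith
    _ ≤ mspan p (flip x i) := by rw [mspan_eq_max_load p (flip x i) (!x i)]; exact le_max_left ..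

lemma heavy_flip_of_heavy {i : Fin n} (hi : x i = heavy p x) (h0 : 0 ≤ p i)
    (hd : p i ≤ disc p x) (hd' : p i < disc p (flip x i)) :
    heavy p (flip x i) = heavy p x := by
  have h := disc_eq_load_heavy_sub p x
  rw [← hi] at h
  rw [disc_eq_abs_load_sub _ _ (x i), load_flip_self, load_flip_not, lt_abs] at hd'
  apply heavy_eq_of_lt
  rw [← hi, load_flip_self, load_flip_not]
  rcases hd' with hd' | hd' <;> linarith

lemma heavyCount_flip_add_one {i : Fin n} (hi : x i = heavy p x) (h0 : 0 ≤ p i)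
    (hd : p i ≤ disc p x) (hd' : p i < disc p (flip x i)) :
    heavyCount p (flip x i) + 1 = heavyCount p x := by
  have hfilter : univ.filter (fun j => flip x i j = heavy p (flip x i)) =
      (univ.filter fun j => x j = heavy p x).erase i := by
    rw [heavy_flip_of_heavy hi h0 hd hd']
    ext j
    rcases eq_or_ne j i with rfl | hj
    · simp [flip, hi]
    · have hflip : flip x i j = x j := Function.update_of_ne hj ..
      simp [hflip, hj]
  rw [heavyCount, heavyCount, hfilter, card_erase_add_one (by simp [hi])]

lemma heavy_eq_of_eq_off {p' : Fin n → ℝ} {j : Fin n} (hp' : ∀ i, i ≠ j → p' i = p i)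
    (hj : |p' j - p j| < disc p x) : heavy p' x = heavy p x := by
  have hload (c : Bool) :
      load p' x c - load p x c = (if x j = c then p' j else 0) - if x j = c then p j else 0 :=
    Fintype.sum_sub_sum_of_eq_off fun i hi => by rw [hp' i hi]
  have h := disc_eq_load_heavy_sub p x
  have h₁ := hload (heavy p x)
  have h₂ := hload (!heavy p x)
  rw [abs_lt] at hj
  apply heavy_eq_of_lt
  by_cases hx : x j = heavy p x
  · simp only [hx, if_true, Bool.eq_not_self, if_false] at h₁ h₂
    linarith
  · simp only [Bool.eq_not_iff.mpr hx, Bool.not_eq_self, if_false, if_true] at h₁ h₂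
    linarith

end BadState

noncomputable def rlsMove (p : Fin n → ℝ) (x : Fin n → Bool) (i : Fin n) : Fin n → Bool :=
  if mspan p (flip x i) ≤ mspan p x then flip x i else x

lemma disc_rlsMove_le (p : Fin n → ℝ) (x : Fin n → Bool) (i : Fin n) :
    disc p (rlsMove p x i) ≤ disc p x := by
  unfold rlsMove
  split_ifs with h
  exacts [disc_le_of_mspan_le p x h, le_rfl]

/-- Each of the `k` jobs on the fuller machine is moved and lowers `k` by one (or ends the bad
phase); every other move is rejected. -/
lemma sum_heavyCount_rlsMove_add_le {L U : ℝ} (hL : 0 < L) {p : Fin n → ℝ}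
    (hp : ∀ i, p i ∈ Set.Icc L U) {x : Fin n → Bool} (hbad : U < disc p x) :
    (∑ i, if U < disc p (rlsMove p x i) then heavyCount p (rlsMove p x i) else 0) +
      heavyCount p x ≤ n * heavyCount p x := by
  have hterm (i : Fin n) :
      (if U < disc p (rlsMove p x i) then heavyCount p (rlsMove p x i) else 0) +
        (if x i = heavy p x then 1 else 0) ≤ heavyCount p x := by
    have h0 : 0 ≤ p i := hL.le.trans (hp i).1
    have hd : p i ≤ disc p x := (hp i).2.trans hbad.le
    by_cases hi : x i = heavy p x
    · rw [rlsMove, if_pos (mspan_flip_le_of_heavy hi h0 hd), if_pos hi]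
      split_ifs with hbad'
      · exact (heavyCount_flip_add_one hi h0 hd ((hp i).2.trans_lt hbad')).le
      · rw [zero_add]
        exact card_pos.mpr ⟨i, by simp [hi]⟩
    · rw [rlsMove, if_neg (not_le.mpr (mspan_lt_mspan_flip_of_not_heavy hi (hL.trans_le (hp i).1))),
        if_pos hbad, if_neg hi]
      rfl
  calc (∑ i, if U < disc p (rlsMove p x i) then heavyCount p (rlsMove p x i) else 0) +
        heavyCount p x
      = ∑ i, ((if U < disc p (rlsMove p x i) then heavyCount p (rlsMove p x i) else 0) +
          if x i = heavy p x then 1 else 0) := by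
        rw [sum_add_distrib, heavyCount, card_filter]
    _ ≤ ∑ _i : Fin n, heavyCount p x := sum_le_sum fun i _ => hterm i
    _ = n * heavyCount p x := by simp

lemma tsum_rlsStep_mul (hn : 0 < n) (p : Fin n → ℝ) (x : Fin n → Bool)
    (g : (Fin n → Bool) → ℝ≥0∞) :
    ∑' y, rlsStep hn p x y * g y = (n : ℝ≥0∞)⁻¹ * ∑ i, g (rlsMove p x i) := by
  rw [rlsStep, PMF.tsum_map_mul, tsum_fintype, mul_sum]
  simp [rlsMove]

open Classical in
noncomputable def potential (U : ℝ) (h : List (Cfg n)) : ℝ≥0∞ :=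
  if ∀ c ∈ h, U < disc c.2 c.1 then heavyCount h.headI.2 h.headI.1 else 0

lemma potential_cons_of_forall {U : ℝ} {c : Cfg n} {h : List (Cfg n)}
    (hh : ∀ c ∈ h, U < disc c.2 c.1) :
    potential U (c :: h) = if U < disc c.2 c.1 then (heavyCount c.2 c.1 : ℝ≥0∞) else 0 := by
  by_cases hc : U < disc c.2 c.1
  · have hall : ∀ c' ∈ c :: h, U < disc c'.2 c'.1 := List.forall_mem_cons.mpr ⟨hc, hh⟩
    rw [potential, if_pos hall, if_pos hc, List.headI_cons]
  · have hall : ¬ ∀ c' ∈ c :: h, U < disc c'.2 c'.1 := fun h' => hc (h' c List.mem_cons_self)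
    rw [potential, if_neg hall, if_neg hc]

lemma potential_cons_of_not_forall {U : ℝ} {c : Cfg n} {h : List (Cfg n)}
    (hh : ¬ ∀ c ∈ h, U < disc c.2 c.1) : potential U (c :: h) = 0 := by
  simp_all [potential]

lemma tsum_rlsStep_potential_le (hn : 0 < n) {L U : ℝ} (hL : 0 < L) {c : Cfg n}
    (hc : ∀ i, c.2 i ∈ Set.Icc L U) {p' : Fin n → ℝ} (hp' : ∀ i, p' i ∈ Set.Icc L U)
    {j : Fin n} (hp'c : ∀ i, i ≠ j → p' i = c.2 i) (h : List (Cfg n)) :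
    ∑' y, rlsStep hn p' c.1 y * potential U ((y, p') :: c :: h) ≤
      (1 - (n : ℝ≥0∞)⁻¹) * potential U (c :: h) := by
  rw [tsum_rlsStep_mul]
  by_cases hall : ∀ c' ∈ c :: h, U < disc c'.2 c'.1
  · have hbad : U < disc c.2 c.1 := hall c List.mem_cons_self
    rw [potential, if_pos hall, List.headI_cons]
    simp only [potential_cons_of_forall hall]
    by_cases hbad' : U < disc p' c.1
    · have hj : |p' j - c.2 j| < disc c.2 c.1 := by
        rw [abs_lt]
        constructor <;> linarith [(hc j).1, (hc j).2, (hp' j).1, (hp' j).2]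
      have hcount : heavyCount p' c.1 = heavyCount c.2 c.1 := by
        rw [heavyCount, heavyCount, heavy_eq_of_eq_off hp'c hj]
      rw [← hcount]
      exact_mod_cast
        ENNReal.inv_mul_le_one_sub_inv_mul hn.ne' (sum_heavyCount_rlsMove_add_le hL hp' hbad')
    · -- The intermediate solution `(c.1, p')` is not recorded in the history, but it is good,
      -- and RLS never increases the discrepancy.
      have hgood (i : Fin n) : ¬ U < disc p' (rlsMove p' c.1 i) :=
        fun h => hbad' (h.trans_le (disc_rlsMove_le p' c.1 i))
      simp [hgood]
  · simp [potential_cons_of_not_forall hall]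

lemma tsum_run_potential_le (hn : 0 < n) {L U : ℝ} (hL : 0 < L) {adv : List (Cfg n) → Fin n → ℝ}
    (hadv : ∀ h i, adv h i ∈ Set.Icc L U)
    (hadv₁ : ∀ h : List (Cfg n), ∃ i₀, ∀ i, i ≠ i₀ → adv h i = h.headI.2 i)
    {x₀ : Fin n → Bool} {p₀ : Fin n → ℝ} (hp₀ : ∀ i, p₀ i ∈ Set.Icc L U) (t : ℕ) :
    ∑' h, run (rlsStep hn) adv (x₀, p₀) t h * potential U h ≤ (1 - (n : ℝ≥0∞)⁻¹) ^ t * n := by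
  have hdrift : ∀ t, ∀ h ∈ (run (rlsStep hn) adv (x₀, p₀) t).support,
      ∑' h', runStep (rlsStep hn) adv h h' * potential U h' ≤
        (1 - (n : ℝ≥0∞)⁻¹) * potential U h := by
    intro t h hh
    obtain ⟨c, hist, rfl, hc⟩ := support_run_subset (rlsStep hn) hadv hp₀ t hh
    obtain ⟨j, hj⟩ := hadv₁ (c :: hist)
    rw [runStep, PMF.tsum_map_mul]
    exact tsum_rlsStep_potential_le hn hL hc (hadv _) hj hist
  refine (PMF.tsum_mul_le_pow_mul_of_bind (run_succ _ adv _) hdrift t).trans ?_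
  gcongr
  rw [run, PMF.tsum_pure_mul, potential]
  split_ifs
  · exact_mod_cast (card_filter_le _ _).trans_eq (card_fin n)
  · exact zero_le

/-- The initial potential `n` over the least potential `(U + n L) / (U + L)` of a solution with
discrepancy above `U` (`add_mul_le_mul_heavyCount`). -/
noncomputable def potentialRatio (n : ℕ) (L U : ℝ) : ℝ := n / ((U + n * L) / (U + L))

lemma one_le_potentialRatio {L U : ℝ} (hn : 0 < n) (hL : 0 < L) (hLU : L ≤ U) :
    1 ≤ potentialRatio n L U := by
  have hn' : (1 : ℝ) ≤ n := by exact_mod_cast hn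
  have hU : 0 < U := hL.trans_le hLU
  rw [potentialRatio, div_div_eq_mul_div, le_div_iff₀ (by positivity)]
  nlinarith

lemma potentialRatio_le {L U : ℝ} (hn : 0 < n) (hL : 0 < L) (hLU : L ≤ U) :
    potentialRatio n L U ≤ n := by
  have hn' : (1 : ℝ) ≤ n := by exact_mod_cast hn
  have hL' : L ≤ n * L := le_mul_of_one_le_left hL.le hn'
  have hU : 0 < U := hL.trans_le hLU
  rw [potentialRatio, div_div_eq_mul_div, div_le_iff₀ (by positivity)]
  nlinarith [mul_le_mul_of_nonneg_left hL' (by positivity : (0 : ℝ) ≤ n)]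

lemma potentialRatio_le_two_mul {L U : ℝ} (hL : 0 < L) (hLU : L ≤ U) :
    potentialRatio n L U ≤ 2 * (U / L) := by
  have hU : 0 < U := hL.trans_le hLU
  rw [potentialRatio, div_div_eq_mul_div, div_le_iff₀ (by positivity), mul_div_assoc',
    div_mul_eq_mul_div, le_div_iff₀ hL]
  nlinarith [mul_le_mul_of_nonneg_left hLU (by positivity : (0 : ℝ) ≤ n * L)]

lemma toOuterMeasure_run_le (hn : 0 < n) {L U : ℝ} (hL : 0 < L) (hLU : L ≤ U)
    {adv : List (Cfg n) → Fin n → ℝ} (hadv : ∀ h i, adv h i ∈ Set.Icc L U)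
    (hadv₁ : ∀ h : List (Cfg n), ∃ i₀, ∀ i, i ≠ i₀ → adv h i = h.headI.2 i)
    {x₀ : Fin n → Bool} {p₀ : Fin n → ℝ} (hp₀ : ∀ i, p₀ i ∈ Set.Icc L U) (t : ℕ) :
    (run (rlsStep hn) adv (x₀, p₀) t).toOuterMeasure {h | ∀ c ∈ h, ¬ disc c.2 c.1 ≤ U} ≤
      ENNReal.ofReal (potentialRatio n L U) * (1 - (n : ℝ≥0∞)⁻¹) ^ t := by
  have hUL : 0 < U + L := by linarith
  have hK : 0 < (U + n * L) / (U + L) := div_pos (by have := hL.trans_le hLU; positivity) hUL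
  have hpot : ∀ h ∈ {h : List (Cfg n) | ∀ c ∈ h, ¬ disc c.2 c.1 ≤ U},
      h ∈ (run (rlsStep hn) adv (x₀, p₀) t).support →
        ENNReal.ofReal ((U + n * L) / (U + L)) ≤ potential U h := by
    intro h hbad hh
    obtain ⟨c, hist, rfl, hc⟩ := support_run_subset (rlsStep hn) hadv hp₀ t hh
    have hall : ∀ c' ∈ c :: hist, U < disc c'.2 c'.1 := fun c' hc' => not_le.mp (hbad c' hc')
    rw [potential, if_pos hall, List.headI_cons, ← ENNReal.ofReal_natCast]
    refine ENNReal.ofReal_le_ofReal ((div_le_iff₀ hUL).mpr ?_)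
    linarith [add_mul_le_mul_heavyCount hc (hall c List.mem_cons_self)]
  have hmarkov := (PMF.toOuterMeasure_mul_le_tsum_mul hpot).trans
    (tsum_run_potential_le hn hL hadv hadv₁ hp₀ t)
  rw [potentialRatio, ENNReal.ofReal_div_of_pos hK, ENNReal.ofReal_natCast,
    ← ENNReal.mul_div_right_comm, mul_comm, ENNReal.le_div_iff_mul_le (by simp [hK]) (by simp)]
  exact hmarkov

lemma expectedHittingTime_rls_le (hn : 0 < n) {L U : ℝ} (hL : 0 < L) (hLU : L ≤ U)
    {adv : List (Cfg n) → Fin n → ℝ} (hadv : ∀ h i, adv h i ∈ Set.Icc L U)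
    (hadv₁ : ∀ h : List (Cfg n), ∃ i₀, ∀ i, i ≠ i₀ → adv h i = h.headI.2 i)
    (x₀ : Fin n → Bool) {p₀ : Fin n → ℝ} (hp₀ : ∀ i, p₀ i ∈ Set.Icc L U) :
    expectedHittingTime (run (rlsStep hn) adv (x₀, p₀)) (fun c => disc c.2 c.1 ≤ U) ≤
      ⌈n * Real.log (potentialRatio n L U)⌉₊ + n := by
  set a := potentialRatio n L U
  have ha : 1 ≤ a := one_le_potentialRatio hn hL hLU
  have hinv : (n : ℝ≥0∞)⁻¹ ≤ 1 := ENNReal.inv_le_one.mpr (by exact_mod_cast hn)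
  have hrate : (1 : ℝ≥0∞) - (n : ℝ≥0∞)⁻¹ = ENNReal.ofReal (1 - (n : ℝ)⁻¹) := by
    rw [ENNReal.ofReal_sub _ (by positivity), ENNReal.ofReal_one,
      ENNReal.ofReal_inv_of_pos (by exact_mod_cast hn), ENNReal.ofReal_natCast]
  have hcut : ENNReal.ofReal a * (1 - (n : ℝ≥0∞)⁻¹) ^ ⌈n * Real.log a⌉₊ ≤ 1 := by
    rw [hrate, ← ENNReal.ofReal_pow (sub_nonneg.mpr (inv_le_one_of_one_le₀ (by exact_mod_cast hn))),
      ← ENNReal.ofReal_mul (by linarith), ← ENNReal.ofReal_one]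
    exact ENNReal.ofReal_le_ofReal (mul_one_sub_inv_pow_natCeil_le_one (one_pos.trans_le ha) hn)
  refine (ENNReal.tsum_le_of_le_one_of_le_mul_pow (fun t => PMF.toOuterMeasure_apply_le_one _ _)
    (toOuterMeasure_run_le hn hL hLU hadv hadv₁ hp₀) ⌈n * Real.log a⌉₊).trans ?_
  rw [ENNReal.sub_sub_cancel ENNReal.one_ne_top hinv, inv_inv]
  gcongr
  exact mul_le_of_le_one_left zero_le hcut

/-- The expected time until RLS has obtained a solution `x` with
`d(x) ≤ U` is `O(n · (1 + min{log n, log R}))`, independently of the initial solution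
and the number of changes made by the adversary (which changes at most one
processing time, to a value in `[L, U]`, per iteration). -/
theorem rls_adversary_discrepancy :
    ∃ C : ℝ, 0 < C ∧
      ∀ (n : ℕ) (hn : 0 < n) (L U : ℝ), 0 < L → L ≤ U →
        ∀ adv : List (Cfg n) → (Fin n → ℝ),
          (∀ h i, adv h i ∈ Set.Icc L U) →
          (∀ h : List (Cfg n), ∃ i₀, ∀ i, i ≠ i₀ → adv h i = h.headI.2 i) →
          ∀ (x₀ : Fin n → Bool) (p₀ : Fin n → ℝ), (∀ i, p₀ i ∈ Set.Icc L U) →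
            expectedHittingTime (run (rlsStep hn) adv (x₀, p₀))
                (fun c => disc c.2 c.1 ≤ U) ≤
              ENNReal.ofReal (C * n * (1 + min (Real.log n) (Real.log (U / L)))) := by
  refine ⟨3, by norm_num, fun n hn L U hL hLU adv hadv hadv₁ x₀ p₀ hp₀ => ?_⟩
  refine (expectedHittingTime_rls_le hn hL hLU hadv hadv₁ x₀ hp₀).trans ?_
  rw [← ENNReal.ofReal_natCast, ← ENNReal.ofReal_natCast n, ← ENNReal.ofReal_add (by positivity)
    (by positivity)]
  exact ENNReal.ofReal_le_ofReal <| natCeil_mul_log_add_le hn ((one_le_div hL).mpr hLU)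
    (one_le_potentialRatio hn hL hLU) (potentialRatio_le hn hL hLU)
    (potentialRatio_le_two_mul hL hLU)

end MakespanDyn
end

section
/- For every constant k > 0 there are constants c', C > 0 such that the following holds for all n. Suppose the n processing times are drawn independently and uniformly at random from {1,…,n} and thereafter remain fixed (a one-time change), and the initial solution is drawn uniformly at random from {0,1}^n. Then with probability at least 1 − n^{−k} (over the processing times, the initial solution, and the run of the algorithm) the (1+1) EA obtains a solution of discrepancy at most c' · log n within C · n^{3.5} · log² n iterations. -/
/-!
Let `m = ⌈(k + 2) log n⌉`. With probability `1 - n^{-(k+1)}` every window of `m` consecutive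
values in `{1, …, n}` contains a processing time (union bound over `n` windows, each missed
with probability `(1 - m/n)^n ≤ e^{-m}`). Given that, from any solution of discrepancy
`D > m` some move of at most two jobs lowers the discrepancy: move a job of the heavier
machine shorter than `D`, or else swap the shortest job of the heavier machine against a job
of the other machine from the window just below it. Such a move flips one bit with `D ≤ n²`
or two bits with `D ≤ n`, so the EA makes it with probability at least `D / (9 n³)`, and the
discrepancy in excess of `m` shrinks in expectation by the factor `1 - 1/(9 n³)` per
iteration. After `C n^{3.5} log² n` iterations Markov's inequality leaves a failure
probability of at most `n^{-(k+1)}`.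
-/

open scoped BigOperators ENNReal

namespace MakespanDyn

open Finset

section Expectation

variable {α β : Type*}

noncomputable def expect (μ : PMF α) (f : α → ℝ≥0∞) : ℝ≥0∞ := ∑' a, μ a * f a

lemma expect_pure (a : α) (f : α → ℝ≥0∞) : expect (PMF.pure a) f = f a := by
  rw [expect, tsum_eq_single a fun b hb => by simp [PMF.pure_apply, hb]]
  simp

lemma expect_bind (μ : PMF α) (κ : α → PMF β) (f : β → ℝ≥0∞) :
    expect (μ.bind κ) f = expect μ fun a => expect (κ a) f := by
  simp only [expect, PMF.bind_apply, ← ENNReal.tsum_mul_right, ← ENNReal.tsum_mul_left,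
    mul_assoc]
  exact ENNReal.tsum_comm

lemma expect_map (μ : PMF α) (g : α → β) (f : β → ℝ≥0∞) :
    expect (μ.map g) f = expect μ (f ∘ g) := by
  simp only [PMF.map, expect_bind, Function.comp_def, expect_pure]

lemma expect_mono (μ : PMF α) {f g : α → ℝ≥0∞} (h : ∀ a, f a ≤ g a) :
    expect μ f ≤ expect μ g :=
  ENNReal.tsum_le_tsum fun a => mul_le_mul_right (h a) _

lemma expect_const_mul (μ : PMF α) (c : ℝ≥0∞) (f : α → ℝ≥0∞) :
    expect μ (fun a => c * f a) = c * expect μ f := by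
  simp only [expect, ← ENNReal.tsum_mul_left, mul_left_comm]

lemma toOuterMeasure_le_expect (μ : PMF α) {f : α → ℝ≥0∞} {s : Set α}
    (h : ∀ a ∈ s, 1 ≤ f a) : μ.toOuterMeasure s ≤ expect μ f := by
  rw [PMF.toOuterMeasure_apply]
  refine ENNReal.tsum_le_tsum fun a => ?_
  by_cases ha : a ∈ s
  · simpa [ha] using mul_le_mul_right (h a ha) (μ a)
  · simp [ha]

lemma expect_add_mul_le (μ : PMF α) {f : α → ℝ≥0∞} {c δ : ℝ≥0∞} {a₀ : α}
    (hf : ∀ a, f a ≤ c) (ha₀ : f a₀ + δ ≤ c) : expect μ f + μ a₀ * δ ≤ c := by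
  classical
  calc expect μ f + μ a₀ * δ = ∑' a, μ a * (f a + if a = a₀ then δ else 0) := by
        simp [expect, mul_add, ENNReal.tsum_add, mul_ite]
    _ ≤ ∑' a, μ a * c := ENNReal.tsum_le_tsum fun a => by
        gcongr
        split_ifs with h
        · exact h ▸ ha₀
        · simpa using hf a
    _ = c := by rw [ENNReal.tsum_mul_right, PMF.tsum_coe, one_mul]

lemma one_sub_toOuterMeasure_compl_le (μ : PMF α) (s : Set α) :
    1 - μ.toOuterMeasure sᶜ ≤ μ.toOuterMeasure s := by
  have h := MeasureTheory.measure_univ_le_add_compl (μ := μ.toOuterMeasure) s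
  rw [(μ.toOuterMeasure_apply_eq_one_iff _).mpr (Set.subset_univ _)] at h
  exact tsub_le_iff_right.mpr h

lemma mul_le_toOuterMeasure_bind (μ : PMF α) (κ : α → PMF β) {G : Set α} {s : Set β}
    {q : ℝ≥0∞} (h : ∀ a ∈ G, a ∈ μ.support → q ≤ (κ a).toOuterMeasure s) :
    μ.toOuterMeasure G * q ≤ (μ.bind κ).toOuterMeasure s := by
  rw [PMF.toOuterMeasure_bind_apply, PMF.toOuterMeasure_apply, ← ENNReal.tsum_mul_right]
  refine ENNReal.tsum_le_tsum fun a => ?_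
  by_cases ha : a ∈ G
  · by_cases hμ : μ a = 0
    · simp [ha, hμ]
    · simpa [ha] using mul_le_mul_right (h a ha hμ) (μ a)
  · simp [ha]

lemma le_toOuterMeasure_bind_of_forall (μ : PMF α) (κ : α → PMF β) {s : Set β} {q : ℝ≥0∞}
    (h : ∀ a ∈ μ.support, q ≤ (κ a).toOuterMeasure s) :
    q ≤ (μ.bind κ).toOuterMeasure s := by
  have := mul_le_toOuterMeasure_bind μ κ (G := Set.univ) fun a _ => h a
  rwa [(μ.toOuterMeasure_apply_eq_one_iff _).mpr (Set.subset_univ _), one_mul] at this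

end Expectation

section Run

variable {n : ℕ} {step : (Fin n → ℝ) → (Fin n → Bool) → PMF (Fin n → Bool)}
  {adv : List (Cfg n) → (Fin n → ℝ)} {init : Cfg n}

lemma headI_mem_of_mem_support_run {t : ℕ} {h : List (Cfg n)}
    (hh : h ∈ (run step adv init t).support) : h.headI ∈ h := by
  cases t with
  | zero => simp_all [run]
  | succ t =>
    obtain ⟨h', -, hh⟩ := (PMF.mem_support_bind_iff _ _ _).mp hh
    obtain ⟨x', -, rfl⟩ := (PMF.mem_support_map_iff _ _ _).mp hh
    simp

lemma expect_run_le {Φ : (Fin n → Bool) → ℝ≥0∞} {r : ℝ≥0∞}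
    (hdrift : ∀ h x, expect (step (adv h) x) Φ ≤ r * Φ x) (t : ℕ) :
    expect (run step adv init t) (fun h => Φ h.headI.1) ≤ r ^ t * Φ init.1 := by
  induction t with
  | zero => simp [run, expect_pure]
  | succ t ih =>
    calc expect (run step adv init (t + 1)) (fun h => Φ h.headI.1)
        ≤ expect (run step adv init t) (fun h => r * Φ h.headI.1) := by
          rw [run, expect_bind]
          refine expect_mono _ fun h => ?_
          simpa [expect_map, Function.comp_def] using hdrift h h.headI.1
      _ ≤ r ^ (t + 1) * Φ init.1 := by
          rw [expect_const_mul, pow_succ', mul_assoc]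
          exact mul_le_mul_right ih r

end Run

section Discrepancy

variable {n : ℕ}

def signedTime (pv : Fin n → ℕ) (x : Fin n → Bool) (i : Fin n) : ℤ :=
  if x i then -(pv i : ℤ) else pv i

def sdisc (pv : Fin n → ℕ) (x : Fin n → Bool) : ℤ := ∑ i, signedTime pv x i

def ndisc (pv : Fin n → ℕ) (x : Fin n → Bool) : ℕ := (sdisc pv x).natAbs

lemma disc_natCast (pv : Fin n → ℕ) (x : Fin n → Bool) :
    disc (fun i => (pv i : ℝ)) x = ndisc pv x := by
  have h : load (fun i => (pv i : ℝ)) x false - load (fun i => (pv i : ℝ)) x true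
      = sdisc pv x := by
    simp only [load, sdisc, signedTime, ← Finset.sum_sub_distrib]
    push_cast
    exact Finset.sum_congr rfl fun i _ => by cases x i <;> simp
  rw [disc, h, ndisc, Nat.cast_natAbs, Int.cast_abs]

lemma mspan_le_mspan_iff (p : Fin n → ℝ) (x y : Fin n → Bool) :
    mspan p y ≤ mspan p x ↔ disc p y ≤ disc p x := by
  have two_mul_mspan : ∀ z, 2 * mspan p z = (load p z false + load p z true) + disc p z := by
    intro z
    rw [mspan, disc]
    rcases le_total (load p z false) (load p z true) with h | h
    · rw [max_eq_right h, abs_of_nonpos (by linarith)]; ring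
    · rw [max_eq_left h, abs_of_nonneg (by linarith)]; ring
  have total : ∀ z, load p z false + load p z true = ∑ i, p i := fun z => by
    simp only [load, ← Finset.sum_add_distrib]
    exact Finset.sum_congr rfl fun i _ => by cases z i <;> simp
  have hx := two_mul_mspan x
  have hy := two_mul_mspan y
  rw [total] at hx hy
  constructor <;> intro h <;> linarith

lemma ndisc_le_sq {pv : Fin n → ℕ} (hpv : ∀ i, pv i ≤ n) (x : Fin n → Bool) :
    ndisc pv x ≤ n ^ 2 :=
  calc ndisc pv x ≤ ∑ i, (signedTime pv x i).natAbs := Int.natAbs_sum_le _ _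
    _ = ∑ i, pv i := Finset.sum_congr rfl fun i _ => by cases h : x i <;> simp [signedTime, h]
    _ ≤ ∑ _i : Fin n, n := Finset.sum_le_sum fun i _ => hpv i
    _ = n ^ 2 := by simp [sq]

def flipSet (x : Fin n → Bool) (S : Finset (Fin n)) : Fin n → Bool :=
  fun i => xor (decide (i ∈ S)) (x i)

lemma sdisc_flipSet (pv : Fin n → ℕ) (x : Fin n → Bool) (S : Finset (Fin n)) :
    sdisc pv (flipSet x S) = sdisc pv x - 2 * ∑ i ∈ S, signedTime pv x i := by
  have hflip : ∀ i, signedTime pv (flipSet x S) i =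
      signedTime pv x i - if i ∈ S then 2 * signedTime pv x i else 0 := fun i => by
    by_cases hi : i ∈ S <;> cases h : x i <;> simp [signedTime, flipSet, hi, h] <;> ring
  rw [sdisc, sdisc, Finset.sum_congr rfl fun i _ => hflip i, Finset.sum_sub_distrib,
    Finset.sum_ite_mem, univ_inter, Finset.mul_sum]

lemma ndisc_flipSet_lt {pv : Fin n → ℕ} {x : Fin n → Bool} {S : Finset (Fin n)}
    (hpos : 0 < ∑ i ∈ S, signedTime pv x i) (hlt : ∑ i ∈ S, signedTime pv x i < sdisc pv x) :
    ndisc pv (flipSet x S) < ndisc pv x := by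
  rw [ndisc, ndisc, sdisc_flipSet]
  omega

lemma exists_eq_false_of_sdisc_pos {pv : Fin n → ℕ} {x : Fin n → Bool} (h : 0 < sdisc pv x) :
    ∃ i, x i = false := by
  by_contra! hx
  refine (Finset.sum_nonpos fun i _ => ?_).not_gt h
  simp [signedTime, hx i]

lemma sdisc_not (pv : Fin n → ℕ) (x : Fin n → Bool) :
    sdisc pv (fun i => !x i) = -sdisc pv x := by
  rw [sdisc, sdisc, ← Finset.sum_neg_distrib]
  exact Finset.sum_congr rfl fun i _ => by cases h : x i <;> simp [signedTime, h]

lemma ndisc_not (pv : Fin n → ℕ) (x : Fin n → Bool) :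
    ndisc pv (fun i => !x i) = ndisc pv x := by
  rw [ndisc, ndisc, sdisc_not, Int.natAbs_neg]

lemma flipSet_not (x : Fin n → Bool) (S : Finset (Fin n)) :
    flipSet (fun i => !x i) S = fun i => !flipSet x S i := by
  funext i
  simp [flipSet]

def HasTimeInEveryWindow (m : ℕ) (pv : Fin n → ℕ) : Prop :=
  ∀ a, a + m ≤ n → ∃ i, pv i ∈ Icc (a + 1) (a + m)

variable {pv : Fin n → ℕ} {m : ℕ}

/-- If the heavier machine holds a job shorter than the discrepancy, move it; otherwise swap
its shortest job `i₀` with a job of the other machine whose time lies in the window just below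
`pv i₀`. The bound `ndisc * n ^ #S ≤ n ^ 3` is what makes the move likely enough: the EA
flips exactly the bits of `S` with probability about `n ^ (-#S)`. -/
lemma exists_flipSet_of_sdisc_pos (hpv : ∀ i, pv i ∈ Icc 1 n)
    (hwin : HasTimeInEveryWindow m pv) {x : Fin n → Bool} (hbad : (m : ℤ) < sdisc pv x) :
    ∃ S : Finset (Fin n), ndisc pv (flipSet x S) < ndisc pv x ∧
      ndisc pv x * n ^ #S ≤ n ^ 3 := by
  have hpv1 : ∀ i, 1 ≤ pv i := fun i => (Finset.mem_Icc.mp (hpv i)).1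
  have hpvn : ∀ i, pv i ≤ n := fun i => (Finset.mem_Icc.mp (hpv i)).2
  have hnd : (ndisc pv x : ℤ) = sdisc pv x := by rw [ndisc]; omega
  by_cases hshort : ∃ i, x i = false ∧ (pv i : ℤ) < sdisc pv x
  · obtain ⟨i, hxi, hid⟩ := hshort
    have hsum : ∑ i ∈ {i}, signedTime pv x i = pv i := by simp [signedTime, hxi]
    refine ⟨{i}, ndisc_flipSet_lt (by have := hpv1 i; omega) (by omega), ?_⟩
    rw [card_singleton, pow_one, pow_succ]
    exact Nat.mul_le_mul_right n (ndisc_le_sq hpvn x)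
  simp only [not_exists, not_and, not_lt] at hshort
  obtain ⟨i₀, hi₀, hmin⟩ := (univ.filter (x · = false)).exists_min_image pv <| by
    obtain ⟨i, hi⟩ := exists_eq_false_of_sdisc_pos (by omega : 0 < sdisc pv x)
    exact ⟨i, by simpa using hi⟩
  simp only [Finset.mem_filter, mem_univ, true_and] at hi₀ hmin
  have hdi₀ := hshort i₀ hi₀
  obtain ⟨j, hj⟩ := hwin (pv i₀ - m - 1) (by have := hpvn i₀; omega)
  rw [Finset.mem_Icc] at hj
  have hxj : x j = true := by
    by_contra h
    have := hmin j (by simpa using h)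
    omega
  have hij : i₀ ≠ j := by rintro rfl; omega
  have hsum : ∑ i ∈ {i₀, j}, signedTime pv x i = pv i₀ - pv j := by
    simp [Finset.sum_pair hij, signedTime, hi₀, hxj, sub_eq_add_neg]
  refine ⟨{i₀, j}, ndisc_flipSet_lt (by omega) (by omega), ?_⟩
  rw [card_pair hij, pow_succ n 2, mul_comm]
  exact Nat.mul_le_mul_left _ (by have := hpvn i₀; omega)

lemma exists_flipSet (hpv : ∀ i, pv i ∈ Icc 1 n) (hwin : HasTimeInEveryWindow m pv)
    {x : Fin n → Bool} (hbad : m < ndisc pv x) :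
    ∃ S : Finset (Fin n), ndisc pv (flipSet x S) < ndisc pv x ∧
      ndisc pv x * n ^ #S ≤ n ^ 3 := by
  rcases lt_or_ge 0 (sdisc pv x) with hpos | hneg
  · exact exists_flipSet_of_sdisc_pos hpv hwin (by rw [ndisc] at hbad; omega)
  · obtain ⟨S, hS⟩ := exists_flipSet_of_sdisc_pos hpv hwin (x := fun i => !x i)
      (by rw [sdisc_not]; rw [ndisc] at hbad; omega)
    exact ⟨S, by simpa only [flipSet_not, ndisc_not] using hS⟩

end Discrepancy

section Mutation

variable {n : ℕ}

lemma maskPMF_decide_mem (hn : 0 < n) (S : Finset (Fin n)) :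
    maskPMF n hn (fun i => decide (i ∈ S)) =
      (n : ℝ≥0∞)⁻¹ ^ #S * (1 - (n : ℝ≥0∞)⁻¹) ^ (n - #S) := by
  change ∏ i, (if decide (i ∈ S) then _ else _) = _
  simp only [decide_eq_true_eq, Finset.prod_ite, Finset.prod_const, Finset.filter_mem_eq_inter,
    univ_inter, Finset.filter_not, Finset.card_sdiff_of_subset (Finset.subset_univ S),
    Finset.card_univ, Fintype.card_fin]

lemma exp_neg_two_mul_le_one_sub {x : ℝ} (hx0 : 0 ≤ x) (hx : x ≤ 1 / 2) :
    Real.exp (-(2 * x)) ≤ 1 - x := by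
  have h : 1 ≤ (1 - x) * (1 + 2 * x) := by nlinarith
  calc Real.exp (-(2 * x)) = (Real.exp (2 * x))⁻¹ := Real.exp_neg _
    _ ≤ (1 + 2 * x)⁻¹ := by
        gcongr
        linarith [Real.add_one_le_exp (2 * x)]
    _ ≤ 1 - x := by
        rw [inv_le_iff_one_le_mul₀ (by linarith)]
        linarith

lemma inv_nine_le_one_sub_inv_pow (hn : 2 ≤ n) : (9 : ℝ≥0∞)⁻¹ ≤ (1 - (n : ℝ≥0∞)⁻¹) ^ n := by
  have hn0 : (0 : ℝ) < n := by positivity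
  have hreal : (9 : ℝ)⁻¹ ≤ (1 - (n : ℝ)⁻¹) ^ n :=
    calc (9 : ℝ)⁻¹ ≤ Real.exp (-2) := by
          rw [Real.exp_neg, show (2 : ℝ) = 1 + 1 by norm_num, Real.exp_add]
          gcongr
          nlinarith [Real.exp_one_lt_d9, Real.exp_pos 1]
      _ = Real.exp (-(2 * (n : ℝ)⁻¹)) ^ n := by
          rw [← Real.exp_nat_mul]; field_simp
      _ ≤ (1 - (n : ℝ)⁻¹) ^ n := by
          gcongr
          exact exp_neg_two_mul_le_one_sub (by positivity)
            (by rw [inv_le_comm₀ hn0 (by norm_num)]; norm_num; exact_mod_cast hn)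
  calc (9 : ℝ≥0∞)⁻¹ = ENNReal.ofReal (9 : ℝ)⁻¹ := by
        rw [ENNReal.ofReal_inv_of_pos (by norm_num)]; norm_num
    _ ≤ ENNReal.ofReal ((1 - (n : ℝ)⁻¹) ^ n) := ENNReal.ofReal_le_ofReal hreal
    _ = (1 - (n : ℝ≥0∞)⁻¹) ^ n := by
        rw [ENNReal.ofReal_pow (by
              have : (n : ℝ)⁻¹ ≤ 1 := inv_le_one_of_one_le₀ (by exact_mod_cast (by omega : 1 ≤ n))
              linarith),
          ENNReal.ofReal_sub _ (by positivity), ENNReal.ofReal_one,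
          ENNReal.ofReal_inv_of_pos hn0, ENNReal.ofReal_natCast]

lemma inv_mul_le_maskPMF (hn : 0 < n) (hn2 : 2 ≤ n) {S : Finset (Fin n)} {D : ℕ}
    (hD : D * n ^ #S ≤ n ^ 3) :
    (9 * (n : ℝ≥0∞) ^ 3)⁻¹ * D ≤ maskPMF n hn (fun i => decide (i ∈ S)) := by
  have hn0 : (n : ℝ≥0∞) ≠ 0 := by simp; omega
  calc (9 * (n : ℝ≥0∞) ^ 3)⁻¹ * D ≤ (9 * (n : ℝ≥0∞) ^ #S)⁻¹ := by
        rw [ENNReal.le_inv_iff_mul_le]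
        calc (9 * (n : ℝ≥0∞) ^ 3)⁻¹ * D * (9 * (n : ℝ≥0∞) ^ #S)
            = (9 * (n : ℝ≥0∞) ^ 3)⁻¹ * (9 * ((D * n ^ #S : ℕ) : ℝ≥0∞)) := by
              push_cast; ring
          _ ≤ (9 * (n : ℝ≥0∞) ^ 3)⁻¹ * (9 * ((n ^ 3 : ℕ) : ℝ≥0∞)) := by gcongr
          _ = 1 := by
              push_cast
              exact ENNReal.inv_mul_cancel (by simp [hn0]) (ENNReal.mul_ne_top (by simp) (by simp))
    _ = (n : ℝ≥0∞)⁻¹ ^ #S * 9⁻¹ := by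
        rw [ENNReal.mul_inv (by simp) (by simp), mul_comm, ENNReal.inv_pow]
    _ ≤ maskPMF n hn (fun i => decide (i ∈ S)) := by
        rw [maskPMF_decide_mem]
        gcongr
        exact (inv_nine_le_one_sub_inv_pow hn2).trans
          (pow_le_pow_right_of_le_one' tsub_le_self (Nat.sub_le n _))

end Mutation

section Drift

variable {n : ℕ}

noncomputable def accept (p : Fin n → ℝ) (x y : Fin n → Bool) : Fin n → Bool :=
  if mspan p y ≤ mspan p x then y else x

lemma eaStep_eq_map_accept (hn : 0 < n) (p : Fin n → ℝ) (x : Fin n → Bool) :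
    eaStep hn p x = (maskPMF n hn).map fun msk => accept p x fun i => xor (msk i) (x i) :=
  rfl

lemma ndisc_accept_le (pv : Fin n → ℕ) (x y : Fin n → Bool) :
    ndisc pv (accept (fun i => (pv i : ℝ)) x y) ≤ ndisc pv x := by
  unfold accept
  split_ifs with h
  · rw [mspan_le_mspan_iff, disc_natCast, disc_natCast] at h
    exact_mod_cast h
  · exact le_rfl

lemma accept_of_ndisc_le {pv : Fin n → ℕ} {x y : Fin n → Bool} (h : ndisc pv y ≤ ndisc pv x) :
    accept (fun i => (pv i : ℝ)) x y = y := by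
  rw [accept, if_pos]
  rw [mspan_le_mspan_iff, disc_natCast, disc_natCast]
  exact_mod_cast h

noncomputable def excess (m : ℕ) (pv : Fin n → ℕ) (x : Fin n → Bool) : ℝ≥0∞ :=
  if m < ndisc pv x then ndisc pv x else 0

lemma excess_le_ndisc (m : ℕ) (pv : Fin n → ℕ) (x : Fin n → Bool) :
    excess m pv x ≤ ndisc pv x := by
  unfold excess
  split_ifs <;> simp

variable {pv : Fin n → ℕ} {m : ℕ}

lemma expect_eaStep_excess_le (hn : 0 < n) (hn2 : 2 ≤ n) (hpv : ∀ i, pv i ∈ Icc 1 n)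
    (hwin : HasTimeInEveryWindow m pv) (x : Fin n → Bool) :
    expect (eaStep hn (fun i => (pv i : ℝ)) x) (excess m pv)
      ≤ (1 - (9 * (n : ℝ≥0∞) ^ 3)⁻¹) * excess m pv x := by
  rw [eaStep_eq_map_accept, expect_map]
  set out := fun msk : Fin n → Bool => accept (fun i => (pv i : ℝ)) x fun i => xor (msk i) (x i)
  by_cases hbad : m < ndisc pv x
  swap
  · have hzero : ∀ msk, excess m pv (out msk) = 0 := fun msk =>
      if_neg (not_lt.mpr ((ndisc_accept_le pv x _).trans (not_lt.mp hbad)))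
    simp [expect, hzero]
  obtain ⟨S, hdrop, hsize⟩ := exists_flipSet hpv hwin hbad
  have hout : expect (maskPMF n hn) (fun msk => (ndisc pv (out msk) : ℝ≥0∞))
      + maskPMF n hn (fun i => decide (i ∈ S)) * 1 ≤ ndisc pv x := by
    refine expect_add_mul_le _ (fun _ => Nat.cast_le.mpr (ndisc_accept_le pv x _)) ?_
    change ((ndisc pv (accept _ x (flipSet x S)) : ℕ) : ℝ≥0∞) + 1 ≤ _
    rw [accept_of_ndisc_le hdrop.le]
    exact_mod_cast hdrop
  rw [mul_one] at hout
  calc expect (maskPMF n hn) (excess m pv ∘ out)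
      ≤ expect (maskPMF n hn) fun msk => (ndisc pv (out msk) : ℝ≥0∞) :=
        expect_mono _ fun _ => excess_le_ndisc _ _ _
    _ ≤ ndisc pv x - maskPMF n hn (fun i => decide (i ∈ S)) :=
        ENNReal.le_sub_of_add_le_right (PMF.apply_ne_top _ _) hout
    _ ≤ ndisc pv x - (9 * (n : ℝ≥0∞) ^ 3)⁻¹ * ndisc pv x :=
        tsub_le_tsub_left (inv_mul_le_maskPMF hn hn2 hsize) _
    _ = (1 - (9 * (n : ℝ≥0∞) ^ 3)⁻¹) * excess m pv x := by
        rw [excess, if_pos hbad, ENNReal.sub_mul fun _ _ => ENNReal.natCast_ne_top _, one_mul]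

end Drift

section Success

variable {n : ℕ} {pv : Fin n → ℕ} {m : ℕ}

lemma one_sub_le_toOuterMeasure_run (hn : 0 < n) (hn2 : 2 ≤ n) (hpv : ∀ i, pv i ∈ Icc 1 n)
    (hwin : HasTimeInEveryWindow m pv) (x₀ : Fin n → Bool) (t : ℕ) :
    1 - (1 - (9 * (n : ℝ≥0∞) ^ 3)⁻¹) ^ t * (n : ℝ≥0∞) ^ 2 ≤
      (run (eaStep hn) (fun _ i => (pv i : ℝ)) (x₀, fun i => (pv i : ℝ)) t).toOuterMeasure
        {h | ∃ c ∈ h, ndisc pv c.1 ≤ m} := by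
  set R := run (eaStep hn) (fun _ i => (pv i : ℝ)) (x₀, fun i => (pv i : ℝ)) t
  refine le_trans (tsub_le_tsub_left ?_ 1) (one_sub_toOuterMeasure_compl_le R _)
  calc R.toOuterMeasure {h | ∃ c ∈ h, ndisc pv c.1 ≤ m}ᶜ
      ≤ R.toOuterMeasure {h | 1 ≤ excess m pv h.headI.1} := by
        refine R.toOuterMeasure_mono fun h ⟨hbad, hsupp⟩ => ?_
        have hm : m < ndisc pv h.headI.1 := by
          by_contra hle
          exact hbad ⟨h.headI, headI_mem_of_mem_support_run hsupp, not_lt.mp hle⟩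
        simp only [Set.mem_ofPred_eq, excess, if_pos hm, Nat.one_le_cast]
        omega
    _ ≤ expect R fun h => excess m pv h.headI.1 := toOuterMeasure_le_expect R fun _ h => h
    _ ≤ (1 - (9 * (n : ℝ≥0∞) ^ 3)⁻¹) ^ t * excess m pv x₀ :=
        expect_run_le (fun _ x => expect_eaStep_excess_le hn hn2 hpv hwin x) t
    _ ≤ (1 - (9 * (n : ℝ≥0∞) ^ 3)⁻¹) ^ t * (n : ℝ≥0∞) ^ 2 := by
        gcongr
        exact (excess_le_ndisc m pv x₀).trans
          (by exact_mod_cast ndisc_le_sq (fun i => (Finset.mem_Icc.mp (hpv i)).2) x₀)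

lemma one_sub_le_toOuterMeasure_uniform_run (hn : 0 < n) (hn2 : 2 ≤ n)
    (hpv : ∀ i, pv i ∈ Icc 1 n) (hwin : HasTimeInEveryWindow m pv) (t : ℕ) {r : ℝ}
    (hr : (m : ℝ) ≤ r) :
    1 - (1 - (9 * (n : ℝ≥0∞) ^ 3)⁻¹) ^ t * (n : ℝ≥0∞) ^ 2 ≤
      ((PMF.uniformOfFintype (Fin n → Bool)).bind fun x₀ =>
          (run (eaStep hn) (fun _ i => (pv i : ℝ)) (x₀, fun i => (pv i : ℝ)) t).map
            fun h => (pv, h)).toOuterMeasure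
        {ph : (Fin n → ℕ) × List (Cfg n) |
          ∃ c ∈ ph.2, disc (fun i => (ph.1 i : ℝ)) c.1 ≤ r} := by
  refine le_toOuterMeasure_bind_of_forall _ _ fun x₀ _ => ?_
  rw [PMF.toOuterMeasure_map_apply]
  refine (one_sub_le_toOuterMeasure_run hn hn2 hpv hwin x₀ t).trans
    (MeasureTheory.measure_mono fun h ⟨c, hc, hle⟩ => ⟨c, hc, ?_⟩)
  rw [disc_natCast]
  exact (Nat.cast_le.mpr hle).trans hr

end Success

section RandomTimes

variable {n : ℕ} {μ : PMF (Fin n → ℕ)}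

lemma mem_Icc_of_mem_support
    (hμ : ∀ f, μ f = if ∀ j, f j ∈ Icc 1 n then ((n : ℝ≥0∞))⁻¹ ^ n else 0)
    {pv : Fin n → ℕ} (hpv : pv ∈ μ.support) (j : Fin n) : pv j ∈ Icc 1 n := by
  by_contra h
  exact hpv (by rw [hμ, if_neg fun hall => h (hall j)])

lemma toOuterMeasure_window_miss_le
    (hμ : ∀ f, μ f = if ∀ j, f j ∈ Icc 1 n then ((n : ℝ≥0∞))⁻¹ ^ n else 0)
    (hn : 0 < n) {a m : ℕ} (ham : a + m ≤ n) :
    μ.toOuterMeasure {pv | ∀ i, pv i ∉ Icc (a + 1) (a + m)}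
      ≤ ENNReal.ofReal (Real.exp (-m)) := by
  set Fs := Fintype.piFinset fun _ : Fin n => Icc 1 n \ Icc (a + 1) (a + m)
  have hwin : Icc (a + 1) (a + m) ⊆ Icc 1 n := fun z hz => by
    simp only [Finset.mem_Icc] at hz ⊢; omega
  have hn0 : (0 : ℝ) < n := by exact_mod_cast hn
  calc μ.toOuterMeasure {pv | ∀ i, pv i ∉ Icc (a + 1) (a + m)}
      ≤ μ.toOuterMeasure Fs := μ.toOuterMeasure_mono fun pv ⟨hmiss, hsupp⟩ => by
        exact Finset.mem_coe.mpr (Fintype.mem_piFinset.mpr fun i =>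
          Finset.mem_sdiff.mpr ⟨mem_Icc_of_mem_support hμ hsupp i, hmiss i⟩)
    _ = ((n - m : ℕ) : ℝ≥0∞) ^ n * (n : ℝ≥0∞)⁻¹ ^ n := by
        rw [PMF.toOuterMeasure_apply_finset, Finset.sum_congr rfl fun pv hpv => by
          rw [hμ, if_pos fun j => (Finset.mem_sdiff.mp (Fintype.mem_piFinset.mp hpv j)).1]]
        simp [Fs, Finset.card_sdiff_of_subset hwin, Nat.card_Icc]
    _ = ENNReal.ofReal ((1 - m / n) ^ n) := by
        rw [← mul_pow, ENNReal.ofReal_pow (by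
            rw [sub_nonneg, div_le_one hn0]; exact_mod_cast (by omega : m ≤ n))]
        congr 1
        rw [show (1 - m / n : ℝ) = (n - m : ℕ) * (n : ℝ)⁻¹ by
            rw [Nat.cast_sub (by omega)]; field_simp,
          ENNReal.ofReal_mul (by positivity), ENNReal.ofReal_natCast,
          ENNReal.ofReal_inv_of_pos hn0, ENNReal.ofReal_natCast]
    _ ≤ ENNReal.ofReal (Real.exp (-m)) :=
        ENNReal.ofReal_le_ofReal (Real.one_sub_div_pow_le_exp_neg (by exact_mod_cast (by omega)))

lemma toOuterMeasure_not_hasTimeInEveryWindow_le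
    (hμ : ∀ f, μ f = if ∀ j, f j ∈ Icc 1 n then ((n : ℝ≥0∞))⁻¹ ^ n else 0)
    (hn : 0 < n) {m : ℕ} (hm : 0 < m) :
    μ.toOuterMeasure {pv | ¬ HasTimeInEveryWindow m pv}
      ≤ n * ENNReal.ofReal (Real.exp (-m)) :=
  calc μ.toOuterMeasure {pv | ¬ HasTimeInEveryWindow m pv}
      ≤ μ.toOuterMeasure
          (⋃ a ∈ range (n + 1 - m), {pv | ∀ i, pv i ∉ Icc (a + 1) (a + m)}) := by
        refine MeasureTheory.measure_mono fun pv hpv => ?_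
        simp only [Set.mem_ofPred_eq, HasTimeInEveryWindow, not_forall, not_exists] at hpv
        obtain ⟨a, ha, hmiss⟩ := hpv
        exact Set.mem_biUnion (mem_range.mpr (by omega)) hmiss
    _ ≤ ∑ a ∈ range (n + 1 - m), μ.toOuterMeasure {pv | ∀ i, pv i ∉ Icc (a + 1) (a + m)} :=
        MeasureTheory.measure_biUnion_finset_le _ _
    _ ≤ ∑ _a ∈ range (n + 1 - m), ENNReal.ofReal (Real.exp (-m)) :=
        Finset.sum_le_sum fun a ha =>
          toOuterMeasure_window_miss_le hμ hn (by rw [mem_range] at ha; omega)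
    _ ≤ n * ENNReal.ofReal (Real.exp (-m)) := by
        rw [sum_const, card_range, nsmul_eq_mul]
        gcongr
        exact_mod_cast (by omega : n + 1 - m ≤ n)

end RandomTimes

section Numerics

variable {n : ℕ} {k : ℝ}

lemma one_half_le_log (hn : 2 ≤ n) : 1 / 2 ≤ Real.log n :=
  (by linarith [Real.log_two_gt_d9] : (1 : ℝ) / 2 ≤ Real.log 2).trans
    (Real.log_le_log (by norm_num) (by exact_mod_cast hn))

lemma natCast_mul_exp_neg_ceil_le (hn : 0 < n) :
    (n : ℝ≥0∞) * ENNReal.ofReal (Real.exp (-⌈(k + 2) * Real.log n⌉₊))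
      ≤ ENNReal.ofReal ((n : ℝ) ^ (-(k + 1))) := by
  have hn0 : (0 : ℝ) < n := by exact_mod_cast hn
  rw [← ENNReal.ofReal_natCast n, ← ENNReal.ofReal_mul hn0.le]
  refine ENNReal.ofReal_le_ofReal ?_
  calc (n : ℝ) * Real.exp (-⌈(k + 2) * Real.log n⌉₊)
      ≤ (n : ℝ) * Real.exp (-((k + 2) * Real.log n)) := by
        gcongr; exact Nat.le_ceil _
    _ = (n : ℝ) ^ (-(k + 1)) := by
        rw [Real.rpow_def_of_pos hn0, ← Real.exp_log hn0, ← Real.exp_add, Real.log_exp]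
        ring_nf

lemma ceil_mul_log_le (hk : 0 ≤ k) (hn : 2 ≤ n) :
    (⌈(k + 2) * Real.log n⌉₊ : ℝ) ≤ (k + 4) * Real.log n := by
  have := Nat.ceil_lt_add_one (by positivity : 0 ≤ (k + 2) * Real.log n)
  nlinarith [one_half_le_log hn]

lemma mul_log_le_inv_mul_ceil (hk : 0 ≤ k) (hn : 2 ≤ n) :
    (k + 3) * Real.log n ≤
      (9 * (n : ℝ) ^ 3)⁻¹ * ⌈18 * (k + 3) * (n : ℝ) ^ ((7 : ℝ) / 2) * Real.log n ^ 2⌉₊ := by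
  have hn1 : (1 : ℝ) ≤ n := by exact_mod_cast (by omega : 1 ≤ n)
  have h72 : (n : ℝ) ^ 3 ≤ (n : ℝ) ^ ((7 : ℝ) / 2) := by
    rw [← Real.rpow_natCast]
    exact Real.rpow_le_rpow_of_exponent_le hn1 (by norm_num)
  have hlog := one_half_le_log hn
  calc (k + 3) * Real.log n
      = (9 * (n : ℝ) ^ 3)⁻¹ * (18 * (k + 3) * Real.log n * ((n : ℝ) ^ 3 * (1 / 2))) := by
        field_simp; ring
    _ ≤ (9 * (n : ℝ) ^ 3)⁻¹ *
          (18 * (k + 3) * Real.log n * ((n : ℝ) ^ ((7 : ℝ) / 2) * Real.log n)) := by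
        gcongr
    _ = (9 * (n : ℝ) ^ 3)⁻¹ * (18 * (k + 3) * (n : ℝ) ^ ((7 : ℝ) / 2) * Real.log n ^ 2) := by
        ring
    _ ≤ _ := by gcongr; exact Nat.le_ceil _

lemma one_sub_inv_pow_mul_sq_le (hn : 2 ≤ n) {T : ℕ}
    (hT : (k + 3) * Real.log n ≤ (9 * (n : ℝ) ^ 3)⁻¹ * T) :
    (1 - (9 * (n : ℝ≥0∞) ^ 3)⁻¹) ^ T * (n : ℝ≥0∞) ^ 2 ≤ ENNReal.ofReal ((n : ℝ) ^ (-(k + 1))) := by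
  set ε : ℝ := (9 * (n : ℝ) ^ 3)⁻¹
  have hn1 : (1 : ℝ) ≤ n := by exact_mod_cast (by omega : 1 ≤ n)
  have hn0 : (0 : ℝ) < n := by linarith
  have hε : 0 ≤ ε := by positivity
  have hε1 : 0 ≤ 1 - ε :=
    sub_nonneg.mpr (inv_le_one_of_one_le₀ (by nlinarith [one_le_pow₀ (n := 3) hn1]))
  have hreal : (1 - ε) ^ T * (n : ℝ) ^ 2 ≤ (n : ℝ) ^ (-(k + 1)) :=
    calc (1 - ε) ^ T * (n : ℝ) ^ 2 ≤ Real.exp (-ε) ^ T * (n : ℝ) ^ 2 := by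
          gcongr
          exact Real.one_sub_le_exp_neg ε
      _ ≤ Real.exp (-((k + 3) * Real.log n)) * (n : ℝ) ^ 2 := by
          rw [← Real.exp_nat_mul]
          gcongr
          linarith
      _ = (n : ℝ) ^ (-(k + 1)) := by
          rw [Real.rpow_def_of_pos hn0, ← Real.exp_log hn0, ← Real.exp_nat_mul,
            ← Real.exp_add, Real.log_exp]
          push_cast
          ring_nf
  calc (1 - (9 * (n : ℝ≥0∞) ^ 3)⁻¹) ^ T * (n : ℝ≥0∞) ^ 2
      = ENNReal.ofReal ((1 - ε) ^ T * (n : ℝ) ^ 2) := by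
        rw [ENNReal.ofReal_mul (by positivity), ENNReal.ofReal_pow hε1, ENNReal.ofReal_pow hn0.le,
          ENNReal.ofReal_sub _ hε, ENNReal.ofReal_one, ENNReal.ofReal_inv_of_pos (by positivity),
          ENNReal.ofReal_mul (by norm_num), ENNReal.ofReal_pow hn0.le, ENNReal.ofReal_natCast]
        norm_num
    _ ≤ ENNReal.ofReal ((n : ℝ) ^ (-(k + 1))) := ENNReal.ofReal_le_ofReal hreal

lemma ofReal_one_sub_rpow_le (hk : 0 ≤ k) (hn : 2 ≤ n) :
    ENNReal.ofReal (1 - (n : ℝ) ^ (-k))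
      ≤ (1 - ENNReal.ofReal ((n : ℝ) ^ (-(k + 1)))) *
          (1 - ENNReal.ofReal ((n : ℝ) ^ (-(k + 1)))) := by
  set β := (n : ℝ) ^ (-(k + 1))
  have hn2 : (2 : ℝ) ≤ n := by exact_mod_cast hn
  have hβ : 0 ≤ β := by positivity
  have hβ1 : β ≤ 1 := Real.rpow_le_one_of_one_le_of_nonpos (by linarith) (by linarith)
  have hnβ : (n : ℝ) ^ (-k) = n * β := by
    rw [show -k = 1 + -(k + 1) by ring, Real.rpow_add (by linarith), Real.rpow_one]
  rw [← ENNReal.ofReal_one, ← ENNReal.ofReal_sub _ hβ, ← ENNReal.ofReal_mul (by linarith)]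
  exact ENNReal.ofReal_le_ofReal (by nlinarith)

end Numerics

/-- Suppose the `n` processing times are drawn independently and
uniformly at random from `{1, …, n}` (joint distribution `μ`) and thereafter remain
fixed, and the initial solution is drawn uniformly at random from `{0,1}^n`.  Then
with probability at least `1 - n^{-k}` (over the processing times, the initial
solution, and the run) the (1+1) EA obtains a solution of discrepancy at most
`c' · log n` within `C · n^{3.5} · log² n` iterations. -/
theorem ea_uniform_times_logn_discrepancy :
    ∀ k : ℝ, 0 < k →
      ∃ c' C : ℝ, 0 < c' ∧ 0 < C ∧
        ∀ (n : ℕ) (hn : 0 < n) (μ : PMF (Fin n → ℕ)),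
          (∀ f, μ f = if ∀ j, f j ∈ Finset.Icc 1 n then ((n : ℝ≥0∞))⁻¹ ^ n else 0) →
          ENNReal.ofReal (1 - (n : ℝ) ^ (-k)) ≤
            (μ.bind fun pv =>
                (PMF.uniformOfFintype (Fin n → Bool)).bind fun x₀ =>
                  (run (eaStep hn) (fun _ i => (pv i : ℝ)) (x₀, fun i => (pv i : ℝ))
                      ⌈C * (n : ℝ) ^ ((7 : ℝ) / 2) * Real.log n ^ 2⌉₊).map
                    fun h => (pv, h)).toOuterMeasure
              {ph : (Fin n → ℕ) × List (Cfg n) |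
                ∃ c ∈ ph.2, disc (fun i => (ph.1 i : ℝ)) c.1 ≤ c' * Real.log n} := by
  intro k hk
  refine ⟨k + 4, 18 * (k + 3), by linarith, by linarith, fun n hn μ hμ => ?_⟩
  obtain rfl | hn2 : n = 1 ∨ 2 ≤ n := by omega
  · simp
  set m := ⌈(k + 2) * Real.log n⌉₊
  set b := ENNReal.ofReal ((n : ℝ) ^ (-(k + 1)))
  have hm : 0 < m := Nat.ceil_pos.mpr (mul_pos (by linarith)
    (Real.log_pos (by exact_mod_cast hn2)))
  have hwindows : 1 - b ≤ μ.toOuterMeasure {pv | HasTimeInEveryWindow m pv} :=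
    (tsub_le_tsub_left ((toOuterMeasure_not_hasTimeInEveryWindow_le hμ hn hm).trans
      (natCast_mul_exp_neg_ceil_le hn)) 1).trans (one_sub_toOuterMeasure_compl_le μ _)
  calc ENNReal.ofReal (1 - (n : ℝ) ^ (-k)) ≤ (1 - b) * (1 - b) :=
        ofReal_one_sub_rpow_le hk.le hn2
    _ ≤ μ.toOuterMeasure {pv | HasTimeInEveryWindow m pv} * (1 - b) := by gcongr
    _ ≤ _ := mul_le_toOuterMeasure_bind μ _ fun pv hwin hsupp => by
        refine le_trans (tsub_le_tsub_left ?_ 1) (one_sub_le_toOuterMeasure_uniform_run hn hn2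
          (mem_Icc_of_mem_support hμ hsupp) hwin _ (ceil_mul_log_le hk.le hn2))
        exact one_sub_inv_pow_mul_sq_le hn2 (mul_log_le_inv_mul_ceil hk.le hn2)

end MakespanDyn
end

section
/- Let n ≥ 3 and let π be the distribution on {1,…,n} given by π(1) = π(n) = 1/(2n−2) and π(j) = 1/(n−1) for 2 ≤ j ≤ n−1. There is a constant n₀ such that for all n ≥ n₀ the following holds: if the processing times p_1,…,p_n are independent random variables each distributed according to π, then for every fixed solution x ∈ {0,1}^n, E[ (d(x)/f(x)) · 1_{d(x) ≤ n} ] ≤ 6/n. -/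
open scoped BigOperators ENNReal
open Finset Fintype

namespace MakespanDyn

/-- The stationary distribution of the fair random walk on `{1, …, n}` with
reflecting barriers: `π(1) = π(n) = 1/(2n-2)` and `π(j) = 1/(n-1)` otherwise. -/
noncomputable def statPi (n : ℕ) (j : ℕ) : ℝ :=
  if j = 1 ∨ j = n then 1 / (2 * (n : ℝ) - 2) else 1 / ((n : ℝ) - 1)

noncomputable def expec (n : ℕ) (F : (Fin n → ℕ) → ℝ) : ℝ :=
  ∑ pv ∈ Fintype.piFinset (fun _ : Fin n => Finset.Icc 1 n),
    (∏ i, statPi n (pv i)) * F pv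

lemma expec_prod (n : ℕ) (h : Fin n → ℕ → ℝ) :
    expec n (fun pv => ∏ i, h i (pv i))
      = ∏ i, ∑ j ∈ Icc 1 n, statPi n j * h i j := by
  rw [Finset.prod_univ_sum]
  unfold expec
  refine Finset.sum_congr rfl fun pv _ => ?_
  rw [← Finset.prod_mul_distrib]

lemma statPi_nonneg {n : ℕ} (hn : 3 ≤ n) (j : ℕ) : 0 ≤ statPi n j := by
  have h3 : (3:ℝ) ≤ n := by exact_mod_cast hn
  unfold statPi; split <;> [skip; skip] <;> apply div_nonneg (by norm_num) (by linarith)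

lemma statPi_le {n : ℕ} (hn : 3 ≤ n) (j : ℕ) : statPi n j ≤ 1 / ((n : ℝ) - 1) := by
  have h3 : (3:ℝ) ≤ n := by exact_mod_cast hn
  unfold statPi
  split
  · apply one_div_le_one_div_of_le <;> nlinarith
  · exact le_refl _

lemma sum_statPi {n : ℕ} (hn : 3 ≤ n) : ∑ j ∈ Icc 1 n, statPi n j = 1 := by
  have h3 : (3:ℝ) ≤ n := by exact_mod_cast hn
  unfold statPi
  rw [Finset.sum_ite]
  have h1 : (Icc 1 n).filter (fun j => j = 1 ∨ j = n) = {1, n} := by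
    ext j; simp only [mem_filter, mem_Icc, mem_insert, mem_singleton]; omega
  have h2 : ((Icc 1 n).filter (fun j => ¬(j = 1 ∨ j = n))).card = n - 2 := by
    have := Finset.card_filter_add_card_filter_not
      (s := Icc 1 n) (p := fun j => j = 1 ∨ j = n)
    have hc : ((Icc 1 n).filter (fun j => j = 1 ∨ j = n)).card = 2 := by
      rw [h1]; rw [Finset.card_insert_of_notMem (by simp; omega), Finset.card_singleton]
    rw [Nat.card_Icc] at this
    omega
  rw [h1, Finset.sum_const]
  have h2' : ∑ x ∈ filter (fun x => ¬(x = 1 ∨ x = n)) (Icc 1 n), 1 / ((n:ℝ) - 1)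
      = (n - 2 : ℕ) * (1 / ((n:ℝ)-1)) := by
    rw [Finset.sum_const, h2, nsmul_eq_mul]
  have hcard : ({1, n} : Finset ℕ).card = 2 := by
    rw [Finset.card_insert_of_notMem (by simp; omega), Finset.card_singleton]
  rw [h2', hcard]
  have hn2 : ((n - 2 : ℕ) : ℝ) = (n:ℝ) - 2 := by
    push_cast [Nat.cast_sub (by omega : 2 ≤ n)]; ring
  rw [hn2, nsmul_eq_mul]
  have e1 : (n:ℝ) - 1 ≠ 0 := by linarith
  have e2 : 2*(n:ℝ) - 2 ≠ 0 := by linarith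
  field_simp
  ring

lemma expec_const_one {n : ℕ} (hn : 3 ≤ n) : expec n (fun _ => 1) = 1 := by
  have := expec_prod n (fun _ _ => 1)
  simp only [Finset.prod_const_one] at this
  rw [this]
  simp only [mul_one, sum_statPi hn, Finset.prod_const_one]

lemma expec_single {n : ℕ} (hn : 3 ≤ n) (c : ℕ → ℝ) (i : Fin n) :
    expec n (fun pv => c (pv i)) = ∑ j ∈ Icc 1 n, statPi n j * c j := by
  have h2 := expec_prod n (fun a y => if a = i then c y else 1)
  have h1 : expec n (fun pv => c (pv i))
      = expec n (fun pv => ∏ a, if a = i then c (pv a) else 1) := by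
    unfold expec
    refine Finset.sum_congr rfl fun pv _ => ?_
    dsimp only
    rw [Finset.prod_ite_eq' Finset.univ i (fun a => c (pv a))]
    simp
  rw [h1, h2]
  rw [Finset.prod_eq_single i]
  · simp
  · intro a _ ha
    simp only [if_neg ha, mul_one, sum_statPi hn]
  · simp

lemma expec_pair_zero {n : ℕ} (hn : 3 ≤ n) (c : ℕ → ℝ)
    (hc : ∑ j ∈ Icc 1 n, statPi n j * c j = 0) {i i' : Fin n} (hii : i ≠ i') :
    expec n (fun pv => c (pv i) * c (pv i')) = 0 := by
  have h2 := expec_prod n (fun a y => if a = i then c y else if a = i' then c y else 1)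
  have h1 : expec n (fun pv => c (pv i) * c (pv i'))
      = expec n (fun pv => ∏ a, if a = i then c (pv a) else if a = i' then c (pv a) else 1) := by
    unfold expec
    refine Finset.sum_congr rfl fun pv _ => ?_
    dsimp only
    congr 1
    have : (∏ a, if a = i then c (pv a) else if a = i' then c (pv a) else 1)
        = c (pv i) * c (pv i') := by
      rw [← Finset.mul_prod_erase Finset.univ
        (fun a => if a = i then c (pv a) else if a = i' then c (pv a) else 1) (Finset.mem_univ i)]
      rw [← Finset.mul_prod_erase _ _
        (Finset.mem_erase.mpr ⟨hii.symm, Finset.mem_univ i'⟩)]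
      rw [if_pos rfl, if_neg (Ne.symm hii), if_pos rfl]
      rw [Finset.prod_eq_one, mul_one]
      intro a ha
      simp only [Finset.mem_erase] at ha
      rw [if_neg ha.2.1, if_neg ha.1]
    rw [this]
  rw [h1, h2]
  apply Finset.prod_eq_zero (Finset.mem_univ i)
  simpa using hc

noncomputable def mu1 (n : ℕ) : ℝ := ∑ j ∈ Icc 1 n, statPi n j * j

lemma expec_mono {n : ℕ} (hn : 3 ≤ n) {F G : (Fin n → ℕ) → ℝ}
    (h : ∀ pv ∈ Fintype.piFinset (fun _ : Fin n => Finset.Icc 1 n), F pv ≤ G pv) :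
    expec n F ≤ expec n G := by
  apply Finset.sum_le_sum
  intro pv hpv
  exact mul_le_mul_of_nonneg_left (h pv hpv)
    (Finset.prod_nonneg fun i _ => statPi_nonneg hn (pv i))

lemma expec_nonneg {n : ℕ} (hn : 3 ≤ n) {F : (Fin n → ℕ) → ℝ}
    (h : ∀ pv, 0 ≤ F pv) : 0 ≤ expec n F := by
  apply Finset.sum_nonneg
  intro pv _
  exact mul_nonneg (Finset.prod_nonneg fun i _ => statPi_nonneg hn (pv i)) (h pv)

lemma expec_sum {n : ℕ} {ι : Type*} (s : Finset ι) (F : ι → (Fin n → ℕ) → ℝ) :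
    expec n (fun pv => ∑ i ∈ s, F i pv) = ∑ i ∈ s, expec n (F i) := by
  unfold expec
  simp_rw [Finset.mul_sum]
  rw [Finset.sum_comm]

lemma gauss_real (m : ℕ) : ∑ j ∈ Icc 1 m, (j : ℝ) = m * (m + 1) / 2 := by
  induction m with
  | zero => simp
  | succ m ih =>
    rw [Finset.sum_Icc_succ_top (by omega : 1 ≤ m + 1), ih]
    push_cast
    ring

lemma mu1_ge_one {n : ℕ} (hn : 3 ≤ n) : 1 ≤ mu1 n := by
  have := sum_statPi hn
  calc (1:ℝ) = ∑ j ∈ Icc 1 n, statPi n j * 1 := by simp [this]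
    _ ≤ mu1 n := by
        apply Finset.sum_le_sum
        intro j hj
        have h1 : (1:ℝ) ≤ j := by
          have := (Finset.mem_Icc.mp hj).1; exact_mod_cast this
        exact mul_le_mul_of_nonneg_left h1 (statPi_nonneg hn j)

lemma mu1_le {n : ℕ} (hn : 3 ≤ n) : mu1 n ≤ n := by
  have := sum_statPi hn
  calc mu1 n ≤ ∑ j ∈ Icc 1 n, statPi n j * n := by
        apply Finset.sum_le_sum
        intro j hj
        have h1 : (j:ℝ) ≤ n := by
          have := (Finset.mem_Icc.mp hj).2; exact_mod_cast this
        exact mul_le_mul_of_nonneg_left h1 (statPi_nonneg hn j)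
    _ = n := by rw [← Finset.sum_mul, this, one_mul]

lemma mu1_half {n : ℕ} (hn : 3 ≤ n) : (n:ℝ)/2 - 1 ≤ mu1 n := by
  have h3 : (3:ℝ) ≤ n := by exact_mod_cast hn
  have hsub : Icc 2 (n-1) ⊆ Icc 1 n := by
    intro j hj; rw [Finset.mem_Icc] at *; omega
  have h1 : ∑ j ∈ Icc 2 (n-1), statPi n j * j ≤ mu1 n := by
    apply Finset.sum_le_sum_of_subset_of_nonneg hsub
    intro j _ _
    exact mul_nonneg (statPi_nonneg hn j) (by positivity)
  have h2 : ∀ j ∈ Icc 2 (n-1), statPi n j * j = 1/((n:ℝ)-1) * j := by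
    intro j hj
    rw [Finset.mem_Icc] at hj
    unfold statPi
    rw [if_neg (by omega)]
  rw [Finset.sum_congr rfl h2, ← Finset.mul_sum] at h1
  have h4 : Icc 1 (n-1) = insert 1 (Icc 2 (n-1)) := by
    ext j; simp only [Finset.mem_Icc, Finset.mem_insert]; omega
  have h5 : ∑ j ∈ Icc 2 (n-1), (j:ℝ) = (n-1 : ℕ) * ((n-1:ℕ) + 1) / 2 - 1 := by
    rw [← gauss_real (n-1), h4, Finset.sum_insert (by simp)]
    push_cast; ring
  rw [h5] at h1
  have hc : ((n-1 : ℕ) : ℝ) = (n:ℝ) - 1 := by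
    push_cast [Nat.cast_sub (by omega : 1 ≤ n)]; ring
  rw [hc] at h1
  have hne : (n:ℝ) - 1 ≠ 0 := by linarith
  refine le_trans ?_ h1
  rw [div_mul_eq_mul_div, one_mul, le_div_iff₀ (by linarith : (0:ℝ) < (n:ℝ)-1)]
  nlinarith

lemma var_le {n : ℕ} (hn : 3 ≤ n) :
    expec n (fun pv => (∑ i, ((pv i : ℝ) - mu1 n))^2) ≤ (n:ℝ)^3 := by
  set c : ℕ → ℝ := fun y => (y:ℝ) - mu1 n with hc
  have hzero : ∑ j ∈ Icc 1 n, statPi n j * c j = 0 := by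
    simp only [hc, mul_sub]
    rw [Finset.sum_sub_distrib, ← Finset.sum_mul, sum_statPi hn, one_mul]
    simp [mu1]
  have hsq : ∀ pv : Fin n → ℕ, (∑ i, c (pv i))^2
      = ∑ i : Fin n, ∑ i' : Fin n, c (pv i) * c (pv i') := by
    intro pv
    rw [sq, Finset.sum_mul_sum]
  have e0 : expec n (fun pv => (∑ i, ((pv i : ℝ) - mu1 n))^2)
      = expec n (fun pv => ∑ i : Fin n, ∑ i' : Fin n, c (pv i) * c (pv i')) := by
    unfold expec
    refine Finset.sum_congr rfl fun pv _ => ?_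
    congr 1
    exact hsq pv
  have e1 : expec n (fun pv => ∑ i : Fin n, ∑ i' : Fin n, c (pv i) * c (pv i'))
      = ∑ i : Fin n, expec n (fun pv => ∑ i' : Fin n, c (pv i) * c (pv i')) :=
    expec_sum Finset.univ (fun i pv => ∑ i' : Fin n, c (pv i) * c (pv i'))
  have e2 : ∀ i : Fin n, expec n (fun pv => ∑ i' : Fin n, c (pv i) * c (pv i'))
      = ∑ i' : Fin n, expec n (fun pv => c (pv i) * c (pv i')) :=
    fun i => expec_sum Finset.univ (fun i' pv => c (pv i) * c (pv i'))
  have e3 : ∀ i : Fin n, ∑ i' : Fin n, expec n (fun pv => c (pv i) * c (pv i'))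
      = expec n (fun pv => c (pv i) * c (pv i)) := by
    intro i
    rw [Finset.sum_eq_single i]
    · intro i' _ hne
      exact expec_pair_zero hn c hzero (Ne.symm hne)
    · intro h; exact absurd (Finset.mem_univ i) h
  have e4 : ∀ i : Fin n, expec n (fun pv => c (pv i) * c (pv i)) ≤ (n:ℝ)^2 := by
    intro i
    rw [expec_single hn (fun y => c y * c y) i]
    have hb : ∀ j ∈ Icc 1 n, statPi n j * (c j * c j) ≤ statPi n j * (n:ℝ)^2 := by
      intro j hj
      rw [Finset.mem_Icc] at hj
      have hj1 : (1:ℝ) ≤ (j:ℝ) := by exact_mod_cast hj.1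
      have hj2 : (j:ℝ) ≤ n := by exact_mod_cast hj.2
      have hm1 := mu1_ge_one hn
      have hm2 := mu1_le hn
      apply mul_le_mul_of_nonneg_left _ (statPi_nonneg hn j)
      simp only [hc]
      nlinarith
    calc ∑ j ∈ Icc 1 n, statPi n j * (c j * c j)
        ≤ ∑ j ∈ Icc 1 n, statPi n j * (n:ℝ)^2 := Finset.sum_le_sum hb
      _ = (n:ℝ)^2 := by rw [← Finset.sum_mul, sum_statPi hn, one_mul]
  calc expec n (fun pv => (∑ i, ((pv i : ℝ) - mu1 n))^2)
      = ∑ i : Fin n, expec n (fun pv => c (pv i) * c (pv i)) := by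
        rw [e0, e1]
        exact Finset.sum_congr rfl fun i _ => (e2 i).trans (e3 i)
    _ ≤ ∑ _i : Fin n, (n:ℝ)^2 := Finset.sum_le_sum fun i _ => e4 i
    _ = (n:ℝ)^3 := by simp [Finset.card_univ]; ring

lemma cheb {n : ℕ} (hn : 20 ≤ n) :
    expec n (fun pv => if (∑ i, (pv i : ℝ)) < 2/5*(n:ℝ)^2 then (1:ℝ) else 0)
      ≤ 400 / n := by
  have hn3 : 3 ≤ n := by omega
  have hnr : (20:ℝ) ≤ n := by exact_mod_cast hn
  have hpos : (0:ℝ) < ((n:ℝ)^2/20)^2 := by positivity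
  have key : ∀ pv : Fin n → ℕ,
      (if (∑ i, (pv i : ℝ)) < 2/5*(n:ℝ)^2 then (1:ℝ) else 0) * ((n:ℝ)^2/20)^2
        ≤ (∑ i, ((pv i : ℝ) - mu1 n))^2 := by
    intro pv
    split
    · rename_i hS
      rw [one_mul]
      have hmu := mu1_half hn3
      have hsum : (∑ i, ((pv i : ℝ) - mu1 n)) = (∑ i, (pv i : ℝ)) - n * mu1 n := by
        rw [Finset.sum_sub_distrib, Finset.sum_const, Finset.card_univ, Fintype.card_fin,
          nsmul_eq_mul]
      rw [hsum]
      have h1 : (∑ i, (pv i : ℝ)) - n * mu1 n ≤ -((n:ℝ)^2/20) := by nlinarith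
      nlinarith
    · rw [zero_mul]; positivity
  have h2 : expec n (fun pv => (if (∑ i, (pv i : ℝ)) < 2/5*(n:ℝ)^2 then (1:ℝ) else 0)
      * ((n:ℝ)^2/20)^2) ≤ (n:ℝ)^3 :=
    le_trans (expec_mono hn3 (fun pv _ => key pv)) (var_le hn3)
  have h3 : expec n (fun pv => (if (∑ i, (pv i : ℝ)) < 2/5*(n:ℝ)^2 then (1:ℝ) else 0)
      * ((n:ℝ)^2/20)^2)
      = expec n (fun pv => if (∑ i, (pv i : ℝ)) < 2/5*(n:ℝ)^2 then (1:ℝ) else 0)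
        * ((n:ℝ)^2/20)^2 := by
    unfold expec
    rw [Finset.sum_mul]
    exact Finset.sum_congr rfl fun pv _ => by ring
  rw [h3] at h2
  rw [← le_div_iff₀ hpos] at h2
  refine h2.trans ?_
  rw [div_le_div_iff₀ (by positivity) (by positivity : (0:ℝ) < n)]
  nlinarith

lemma floor_le {n : ℕ} (hn : 26 ≤ n) :
    expec n (fun pv => if (∑ i, (pv i : ℝ)) < (n:ℝ)^2/100 then (1:ℝ) else 0)
      ≤ (56/100 : ℝ)^n := by
  classical
  have hn3 : 3 ≤ n := by omega
  have hnr : (26:ℝ) ≤ n := by exact_mod_cast hn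
  obtain ⟨k, hk⟩ : ∃ k : ℕ, k = n / 25 := ⟨_, rfl⟩
  obtain ⟨m, hm⟩ : ∃ m : ℕ, m = n - k := ⟨_, rfl⟩
  have hkn : 25 * k ≤ n := by omega
  set ind : ℕ → ℝ := fun y => if 4*y ≤ n then 1 else 0 with hind
  have ind_nonneg : ∀ y, 0 ≤ ind y := by
    intro y; rw [hind]; dsimp only; split <;> norm_num
  set q : ℝ := ∑ j ∈ Icc 1 n, statPi n j * ind j with hq
  have q_nonneg : 0 ≤ q := by
    apply Finset.sum_nonneg
    exact fun j _ => mul_nonneg (statPi_nonneg hn3 j) (ind_nonneg j)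
  have q_le : q ≤ 26/100 := by
    have step1 : q ≤ ∑ j ∈ Icc 1 n, (if 4*j ≤ n then 1/((n:ℝ)-1) else 0) := by
      apply Finset.sum_le_sum
      intro j _
      rw [hind]; dsimp only
      split
      · rw [mul_one]; exact statPi_le hn3 j
      · rw [mul_zero]
    have step2 : ∑ j ∈ Icc 1 n, (if 4*j ≤ n then 1/((n:ℝ)-1) else 0)
        = ((Icc 1 n).filter (fun j => 4*j ≤ n)).card * (1/((n:ℝ)-1)) := by
      rw [← Finset.sum_filter, Finset.sum_const, nsmul_eq_mul]
    have step3 : ((Icc 1 n).filter (fun j => 4*j ≤ n)).card ≤ n / 4 := by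
      have hsub : (Icc 1 n).filter (fun j => 4*j ≤ n) ⊆ Icc 1 (n/4) := by
        intro j hj
        rw [Finset.mem_filter, Finset.mem_Icc] at hj
        rw [Finset.mem_Icc]
        refine ⟨hj.1.1, ?_⟩
        omega
      calc _ ≤ (Icc 1 (n/4)).card := Finset.card_le_card hsub
        _ ≤ n / 4 := by rw [Nat.card_Icc]; omega
    have step4 : (((Icc 1 n).filter (fun j => 4*j ≤ n)).card : ℝ) * (1/((n:ℝ)-1))
        ≤ ((n:ℝ)/4) * (1/((n:ℝ)-1)) := by
      apply mul_le_mul_of_nonneg_right _ (by apply one_div_nonneg.mpr; linarith)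
      calc (((Icc 1 n).filter (fun j => 4*j ≤ n)).card : ℝ)
          ≤ ((n/4 : ℕ) : ℝ) := by exact_mod_cast step3
        _ ≤ (n:ℝ)/4 := Nat.cast_div_le
    have step5 : ((n:ℝ)/4) * (1/((n:ℝ)-1)) ≤ 26/100 := by
      rw [div_mul_div_comm, mul_one, div_le_div_iff₀ (by linarith) (by norm_num)]
      linarith
    calc q ≤ _ := step1
      _ = _ := step2
      _ ≤ _ := step4
      _ ≤ 26/100 := step5
  -- expectation of a product of indicators over a subset B
  have expB : ∀ B : Finset (Fin n),
      expec n (fun pv => ∏ i ∈ B, ind (pv i)) = q ^ B.card := by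
    intro B
    have h2 := expec_prod n (fun a y => if a ∈ B then ind y else 1)
    have e1 : expec n (fun pv => ∏ i ∈ B, ind (pv i))
        = expec n (fun pv => ∏ a, if a ∈ B then ind (pv a) else 1) := by
      unfold expec
      refine Finset.sum_congr rfl fun pv _ => ?_
      dsimp only
      rw [Finset.prod_ite_mem Finset.univ B (fun a => ind (pv a)), Finset.univ_inter]
    rw [e1, h2]
    have e2 : ∀ a : Fin n, (∑ j ∈ Icc 1 n, statPi n j * if a ∈ B then ind j else 1)
        = if a ∈ B then q else 1 := by
      intro a
      split
      · rfl
      · simp only [mul_one]; exact sum_statPi hn3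
    rw [Finset.prod_congr rfl (fun a _ => e2 a)]
    rw [Finset.prod_ite_mem Finset.univ B (fun _ => q), Finset.univ_inter, Finset.prod_const]
  -- pointwise bound
  have pointwise : ∀ pv : Fin n → ℕ,
      (if (∑ i, (pv i : ℝ)) < (n:ℝ)^2/100 then (1:ℝ) else 0)
        ≤ ∑ B ∈ Finset.powersetCard m (Finset.univ : Finset (Fin n)),
            ∏ i ∈ B, ind (pv i) := by
    intro pv
    have rhs_nonneg : (0:ℝ) ≤ ∑ B ∈ Finset.powersetCard m (Finset.univ : Finset (Fin n)),
        ∏ i ∈ B, ind (pv i) :=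
      Finset.sum_nonneg fun B _ => Finset.prod_nonneg fun i _ => ind_nonneg (pv i)
    split
    · rename_i hS
      set C := Finset.univ.filter (fun i : Fin n => 4 * pv i ≤ n) with hC
      set A := Finset.univ.filter (fun i : Fin n => ¬ (4 * pv i ≤ n)) with hA
      have hA1 : (A.card : ℝ) * ((n:ℝ)/4) ≤ ∑ i, (pv i:ℝ) := by
        calc (A.card : ℝ) * ((n:ℝ)/4) = ∑ _i ∈ A, ((n:ℝ)/4) := by
              rw [Finset.sum_const, nsmul_eq_mul]
          _ ≤ ∑ i ∈ A, (pv i : ℝ) := by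
              apply Finset.sum_le_sum
              intro i hi
              rw [hA, Finset.mem_filter] at hi
              have h4 : n < 4 * pv i := by omega
              have h5 : (n:ℝ) < 4 * (pv i:ℝ) := by exact_mod_cast h4
              linarith
          _ ≤ ∑ i, (pv i : ℝ) := by
              apply Finset.sum_le_sum_of_subset_of_nonneg (Finset.filter_subset _ _)
              intro i _ _; positivity
      have hAk : A.card ≤ k := by
        rw [hk, Nat.le_div_iff_mul_le (by norm_num : 0 < 25)]
        have hr : (A.card : ℝ) * 25 < n := by nlinarith [hA1, hS, hnr]
        have hr2 : A.card * 25 < n := by exact_mod_cast hr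
        omega
      have hCA : C.card + A.card = n := by
        rw [hC, hA]
        rw [Finset.card_filter_add_card_filter_not]
        simp
      have hmC : m ≤ C.card := by omega
      obtain ⟨B, hBsub, hBcard⟩ := Finset.exists_subset_card_eq hmC
      have hterm : ∏ i ∈ B, ind (pv i) = 1 := by
        apply Finset.prod_eq_one
        intro i hi
        have := hBsub hi
        rw [hC, Finset.mem_filter] at this
        rw [hind]; dsimp only
        rw [if_pos this.2]
      calc (1:ℝ) = ∏ i ∈ B, ind (pv i) := hterm.symm
        _ ≤ ∑ B' ∈ Finset.powersetCard m (Finset.univ : Finset (Fin n)),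
              ∏ i ∈ B', ind (pv i) := by
            apply Finset.single_le_sum
              (f := fun B' => ∏ i ∈ B', ind (pv i))
              (fun B' _ => Finset.prod_nonneg fun i _ => ind_nonneg (pv i))
            exact Finset.mem_powersetCard_univ.mpr hBcard
    · exact rhs_nonneg
  -- assemble
  have main : expec n (fun pv => if (∑ i, (pv i : ℝ)) < (n:ℝ)^2/100 then (1:ℝ) else 0)
      ≤ (n.choose m : ℝ) * q ^ m := by
    calc expec n (fun pv => if (∑ i, (pv i : ℝ)) < (n:ℝ)^2/100 then (1:ℝ) else 0)
        ≤ expec n (fun pv => ∑ B ∈ Finset.powersetCard m (Finset.univ : Finset (Fin n)),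
            ∏ i ∈ B, ind (pv i)) := expec_mono hn3 (fun pv _ => pointwise pv)
      _ = ∑ B ∈ Finset.powersetCard m (Finset.univ : Finset (Fin n)),
            expec n (fun pv => ∏ i ∈ B, ind (pv i)) :=
          expec_sum _ (fun B pv => ∏ i ∈ B, ind (pv i))
      _ = ∑ B ∈ Finset.powersetCard m (Finset.univ : Finset (Fin n)), q ^ m := by
          refine Finset.sum_congr rfl fun B hB => ?_
          rw [expB B, Finset.mem_powersetCard_univ.mp hB]
      _ = (n.choose m : ℝ) * q ^ m := by
          rw [Finset.sum_const, Finset.card_powersetCard, Finset.card_univ,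
            Fintype.card_fin, nsmul_eq_mul]
  refine main.trans ?_
  -- numeric estimate
  have hchoose : (n.choose m : ℝ) ≤ 2^n := by
    have h1 : n.choose m ≤ ∑ i ∈ Finset.range (n+1), n.choose i := by
      apply Finset.single_le_sum (fun i _ => Nat.zero_le _)
      rw [Finset.mem_range]; omega
    rw [Nat.sum_range_choose] at h1
    calc (n.choose m : ℝ) ≤ ((2^n : ℕ) : ℝ) := by exact_mod_cast h1
      _ = 2^n := by push_cast; ring
  have hqm : q ^ m ≤ (26/100 : ℝ)^m := pow_le_pow_left₀ q_nonneg q_le m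
  have hm24 : 24 * k ≤ m := by rw [hm]; omega
  have h1314 : ((13:ℝ)/14)^m ≤ ((28:ℝ)/100)^k := by
    calc ((13:ℝ)/14)^m ≤ ((13:ℝ)/14)^(24*k) :=
          pow_le_pow_of_le_one (by norm_num) (by norm_num) hm24
      _ = (((13:ℝ)/14)^24)^k := by rw [pow_mul]
      _ ≤ ((28:ℝ)/100)^k := pow_le_pow_left₀ (by positivity) (by norm_num) k
  calc (n.choose m : ℝ) * q ^ m ≤ 2^n * (26/100:ℝ)^m := by
        apply mul_le_mul hchoose hqm (by positivity) (by positivity)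
    _ = 2^n * (((13:ℝ)/14)^m * ((28:ℝ)/100)^m) := by
        rw [← mul_pow]; norm_num
    _ ≤ 2^n * (((28:ℝ)/100)^k * ((28:ℝ)/100)^m) := by
        apply mul_le_mul_of_nonneg_left _ (by positivity)
        exact mul_le_mul_of_nonneg_right h1314 (by positivity)
    _ = 2^n * ((28:ℝ)/100)^n := by
        rw [← pow_add, show k + m = n by omega]
    _ = (56/100 : ℝ)^n := by
        rw [← mul_pow]; norm_num

lemma load_add {n : ℕ} (p : Fin n → ℝ) (x : Fin n → Bool) :
    load p x false + load p x true = ∑ i, p i := by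
  unfold load
  rw [← Finset.sum_add_distrib]
  refine Finset.sum_congr rfl fun i _ => ?_
  cases hx : x i <;> simp [hx]

lemma mspan_eq {n : ℕ} (p : Fin n → ℝ) (x : Fin n → Bool) :
    mspan p x = ((∑ i, p i) + disc p x) / 2 := by
  rw [← load_add p x]
  unfold mspan disc
  rcases le_total (load p x false) (load p x true) with h | h
  · rw [max_eq_right h, abs_of_nonpos (by linarith)]; ring
  · rw [max_eq_left h, abs_of_nonneg (by linarith)]; ring

/-- If the processing times are independent with distribution `π`
(the stationary distribution of the reflecting random walk on `{1, …, n}`), then for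
every fixed solution `x` and all large enough `n ≥ 3`,
`E[(d(x)/f(x)) · 1_{d(x) ≤ n}] ≤ 6/n`. -/
theorem expected_discrepancy_makespan_ratio :
    ∃ n₀ : ℕ, ∀ n : ℕ, n₀ ≤ n → 3 ≤ n →
      ∀ x : Fin n → Bool,
        (∑ pv ∈ Fintype.piFinset fun _ : Fin n => Finset.Icc 1 n,
            (∏ i, statPi n (pv i)) *
              (if disc (fun i => (pv i : ℝ)) x ≤ n then
                  disc (fun i => (pv i : ℝ)) x / mspan (fun i => (pv i : ℝ)) x
                else 0)) ≤ 6 / n := by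
  -- tail: eventually n² (56/100)^n < 1/2
  have hsumm : Summable (fun n : ℕ => (n:ℝ)^2 * (56/100:ℝ)^n) := by
    apply summable_pow_mul_geometric_of_norm_lt_one
    rw [Real.norm_eq_abs, abs_of_nonneg (by norm_num : (0:ℝ) ≤ 56/100)]
    norm_num
  have hev : ∀ᶠ n : ℕ in Filter.atTop, (n:ℝ)^2 * (56/100:ℝ)^n < 1/2 :=
    hsumm.tendsto_atTop_zero.eventually_lt_const (by norm_num)
  obtain ⟨N, hN⟩ := Filter.eventually_atTop.mp hev
  refine ⟨max N 160001, fun n hn0 hn3 x => ?_⟩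
  have hnN : N ≤ n := le_trans (le_max_left _ _) hn0
  have hn16 : 160001 ≤ n := le_trans (le_max_right _ _) hn0
  have hnr : (160001:ℝ) ≤ n := by exact_mod_cast hn16
  have hnpos : (0:ℝ) < n := by linarith
  set F : (Fin n → ℕ) → ℝ := fun pv =>
    if disc (fun i => (pv i : ℝ)) x ≤ n then
      disc (fun i => (pv i : ℝ)) x / mspan (fun i => (pv i : ℝ)) x
    else 0 with hF
  have hEq : (∑ pv ∈ Fintype.piFinset fun _ : Fin n => Finset.Icc 1 n,
      (∏ i, statPi n (pv i)) *
        (if disc (fun i => (pv i : ℝ)) x ≤ n then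
            disc (fun i => (pv i : ℝ)) x / mspan (fun i => (pv i : ℝ)) x
          else 0)) = expec n F := rfl
  rw [hEq]
  -- pointwise master bound
  set G : (Fin n → ℕ) → ℝ := fun pv =>
    5/(n:ℝ) + (200/(n:ℝ)) * (if (∑ i, (pv i : ℝ)) < 2/5*(n:ℝ)^2 then (1:ℝ) else 0)
      + (if (∑ i, (pv i : ℝ)) < (n:ℝ)^2/100 then (1:ℝ) else 0) with hG
  have hFG : ∀ pv ∈ Fintype.piFinset (fun _ : Fin n => Finset.Icc 1 n), F pv ≤ G pv := by
    intro pv hpv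
    have hmem : ∀ i, pv i ∈ Finset.Icc 1 n := fun i => (Fintype.mem_piFinset.mp hpv) i
    have hS1 : (n:ℝ) ≤ ∑ i, (pv i : ℝ) := by
      calc (n:ℝ) = ∑ _i : Fin n, (1:ℝ) := by
            rw [Finset.sum_const, Finset.card_univ, Fintype.card_fin, nsmul_eq_mul, mul_one]
        _ ≤ ∑ i, (pv i : ℝ) := by
            apply Finset.sum_le_sum
            intro i _
            have := (Finset.mem_Icc.mp (hmem i)).1
            exact_mod_cast this
    set S := ∑ i, (pv i : ℝ) with hSdef
    set d := disc (fun i => (pv i : ℝ)) x with hd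
    have hd0 : 0 ≤ d := abs_nonneg _
    have hspan : mspan (fun i => (pv i : ℝ)) x = (S + d) / 2 := mspan_eq _ x
    have indpos2 : (0:ℝ) ≤ (if S < 2/5*(n:ℝ)^2 then (1:ℝ) else 0) := by split <;> norm_num
    have indpos3 : (0:ℝ) ≤ (if S < (n:ℝ)^2/100 then (1:ℝ) else 0) := by split <;> norm_num
    rw [hG]; dsimp only
    rw [hF]; dsimp only
    split
    · rename_i hdn
      rw [← hd, hspan]
      have hratio : d / ((S + d)/2) ≤ 2*(n:ℝ)/(S + (n:ℝ)) := by
        rw [div_div_eq_mul_div, div_le_div_iff₀ (by linarith) (by linarith)]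
        nlinarith
      rcases lt_or_ge S ((n:ℝ)^2/100) with hc1 | hc1
      · -- bottom: ratio ≤ 1
        have h1 : 2*(n:ℝ)/(S + (n:ℝ)) ≤ 1 := by
          rw [div_le_one (by linarith)]
          linarith
        rw [if_pos hc1]
        have : (0:ℝ) ≤ 5/(n:ℝ) := by positivity
        have h2 : (0:ℝ) ≤ (200/(n:ℝ)) * (if S < 2/5*(n:ℝ)^2 then (1:ℝ) else 0) := by
          apply mul_nonneg (by positivity) indpos2
        linarith [hratio.trans h1]
      · rcases lt_or_ge S (2/5*(n:ℝ)^2) with hc2 | hc2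
        · have h1 : 2*(n:ℝ)/(S + (n:ℝ)) ≤ 200/(n:ℝ) := by
            rw [div_le_div_iff₀ (by linarith) hnpos]
            nlinarith
          rw [if_pos hc2]
          have : (0:ℝ) ≤ 5/(n:ℝ) := by positivity
          linarith [hratio.trans h1, indpos3]
        · have h1 : 2*(n:ℝ)/(S + (n:ℝ)) ≤ 5/(n:ℝ) := by
            rw [div_le_div_iff₀ (by linarith) hnpos]
            nlinarith
          have h2 : (0:ℝ) ≤ (200/(n:ℝ)) * (if S < 2/5*(n:ℝ)^2 then (1:ℝ) else 0) := by
            apply mul_nonneg (by positivity) indpos2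
          linarith [hratio.trans h1, indpos3]
    · -- d > n : F = 0
      have : (0:ℝ) ≤ 5/(n:ℝ) := by positivity
      have h2 : (0:ℝ) ≤ (200/(n:ℝ)) * (if S < 2/5*(n:ℝ)^2 then (1:ℝ) else 0) := by
        apply mul_nonneg (by positivity) indpos2
      linarith [indpos3]
  have step1 : expec n F ≤ expec n G := expec_mono hn3 hFG
  -- linearity of expec on G
  have hsplit : expec n G
      = 5/(n:ℝ) * expec n (fun _ => 1)
        + (200/(n:ℝ)) * expec n (fun pv => if (∑ i, (pv i : ℝ)) < 2/5*(n:ℝ)^2 then (1:ℝ) else 0)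
        + expec n (fun pv => if (∑ i, (pv i : ℝ)) < (n:ℝ)^2/100 then (1:ℝ) else 0) := by
    unfold expec
    rw [Finset.mul_sum, Finset.mul_sum, ← Finset.sum_add_distrib, ← Finset.sum_add_distrib]
    refine Finset.sum_congr rfl fun pv _ => ?_
    rw [hG]; dsimp only
    ring
  have hch := cheb (n := n) (by omega)
  have hfl := floor_le (n := n) (by omega)
  have hone := expec_const_one (n := n) hn3
  have hexpG : expec n G ≤ 5/(n:ℝ) + (200/(n:ℝ)) * (400/(n:ℝ)) + (56/100:ℝ)^n := by
    rw [hsplit, hone, mul_one]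
    have h2 : (200/(n:ℝ)) * expec n (fun pv => if (∑ i, (pv i : ℝ)) < 2/5*(n:ℝ)^2 then (1:ℝ) else 0)
        ≤ (200/(n:ℝ)) * (400/(n:ℝ)) :=
      mul_le_mul_of_nonneg_left hch (by positivity)
    linarith [hfl]
  refine (step1.trans hexpG).trans ?_
  -- final numeric bound
  have htail : (56/100:ℝ)^n ≤ 1/(2*(n:ℝ)^2) := by
    have := hN n hnN
    rw [lt_div_iff₀ (by norm_num : (0:ℝ) < 2)] at this
    calc (56/100:ℝ)^n = ((n:ℝ)^2 * (56/100:ℝ)^n) / (n:ℝ)^2 := by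
          field_simp
      _ ≤ (1/2) / (n:ℝ)^2 := by
          apply div_le_div_of_nonneg_right _ (by positivity)
          linarith
      _ = 1/(2*(n:ℝ)^2) := by ring
  have hmid : (200/(n:ℝ)) * (400/(n:ℝ)) = 80000/(n:ℝ)^2 := by
    field_simp; ring
  rw [hmid]
  have hfinal : 80000/(n:ℝ)^2 + 1/(2*(n:ℝ)^2) ≤ 1/(n:ℝ) := by
    rw [div_add_div _ _ (by positivity) (by positivity), div_le_div_iff₀ (by positivity) hnpos]
    have hcube : (0:ℝ) ≤ (n:ℝ)^3 := by positivity
    nlinarith [mul_le_mul_of_nonneg_right hnr hcube]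
  have h6 : 6/(n:ℝ) = 5/(n:ℝ) + 1/(n:ℝ) := by ring
  linarith [htail, hfinal]

end MakespanDyn
end
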